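/- arXiv:1503.02203 — 6 statements merged into one kernel-verified Lean document; each statement's English description precedes it below -/
import Mathlib

section
/- Fix d ∈ ℕ (d ≥ 1) and let f_d : ℝ → ℝ be defined by f_d(a) = 1 + |a| for a ≤ 0, f_d(a) = (∑_{i=0}^{d−1} a^i)^{−1} for 0 ≤ a ≤ 1, f_d(a) = 1 + 1/d − a for 1 ≤ a ≤ 1 + 1/d, and f_d(a) = 0 for a ≥ 1 + 1/d. If (a, A) ∈ ℝ² satisfies A > f_d(a), then ℝ^d is not uniformly κΨ_{a,A}-approximable for any κ > 0; that is, for every κ > 0 and every Q₀ ∈ ℕ there exist x ∈ ℝ^d and an integer Q ≥ Q₀ such that for all q ∈ ℕ with 1 ≤ q ≤ Q and all p ∈ ℤ^d one has ‖x − p/q‖_∞ ≥ κ q^{−a} Q^{−A}. -/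
/-!
For `a ≤ 1` the point is explicit. Its coordinates `1 / (2 N_{i+1})` sit just to the right of `0`
at scales `N_0 = 1`, `N_{i+1} = B N_i ^ a` with `B = Q ^ A / (2κ)`, chosen so that coordinate `i`
stays at distance `1 / (2 N_{i+1}) = κ N_i ^ (-a) Q ^ (-A) ≥ κ q ^ (-a) Q ^ (-A)` from every `p / q`
with `N_i ≤ q ≤ N_{i+1}`; the last scale `N_d ≍ Q ^ (A (1 + a + ⋯ + a ^ (d-1)))` exceeds `Q`
for large `Q` because `A > f_d(a)`. For `a ≤ 0` the single coordinate `1 / (2Q)` suffices.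

For `a > 1` a volume argument works instead: the balls of radius `κ q ^ (-a) Q ^ (-A)` about the
points `p / q`, `q ≤ Q`, that meet the unit cube have total volume
`≪ Q ^ (-A d) ∑_{q ≤ Q} q ^ ((1 - a) d) ≪ Q ^ (max (1 - (a - 1) d) 0 - A d + ε)`,
which is `< 1` for large `Q` once `A > f_d(a)` and `ε` is small, so they cannot cover the cube.
-/

open Finset Filter MeasureTheory

/-- The critical exponent function `f_d` from the paper. -/
noncomputable def fd (d : ℕ) (a : ℝ) : ℝ :=
  if a ≤ 0 then 1 + |a|
  else if a ≤ 1 then (∑ i ∈ Finset.range d, a ^ i)⁻¹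
  else if a ≤ 1 + 1 / d then 1 + 1 / d - a
  else 0

lemma fd_of_nonpos {d : ℕ} {a : ℝ} (ha : a ≤ 0) : fd d a = 1 - a := by
  rw [fd, if_pos ha, abs_of_nonpos ha, sub_eq_add_neg]

lemma fd_of_pos_of_le_one {d : ℕ} {a : ℝ} (ha : 0 < a) (ha1 : a ≤ 1) :
    fd d a = (∑ i ∈ range d, a ^ i)⁻¹ := by
  rw [fd, if_neg ha.not_ge, if_pos ha1]

lemma fd_of_one_lt {d : ℕ} {a : ℝ} (ha : 1 < a) : fd d a = max (1 + 1 / d - a) 0 := by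
  rw [fd, if_neg (by linarith), if_neg ha.not_ge]
  split_ifs with h
  · exact (max_eq_left (by linarith)).symm
  · exact (max_eq_right (by linarith)).symm

def FarFromRationals {d : ℕ} (x : Fin d → ℝ) (Q : ℕ) (r : ℕ → ℝ) : Prop :=
  ∀ q : ℕ, 1 ≤ q → q ≤ Q → ∀ p : Fin d → ℤ, r q ≤ ‖x - fun i => (p i : ℝ) / q‖

lemma FarFromRationals.of_exists_coord {d Q : ℕ} {x : Fin d → ℝ} {r : ℕ → ℝ}
    (h : ∀ q : ℕ, 1 ≤ q → q ≤ Q → ∃ i, ∀ p : ℤ, r q ≤ |x i - p / q|) :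
    FarFromRationals x Q r := by
  intro q hq hqQ p
  obtain ⟨i, hi⟩ := h q hq hqQ
  exact (hi (p i)).trans (norm_le_pi_norm (x - fun i => (p i : ℝ) / q) i)

lemma le_abs_sub_int_div {y q : ℝ} (hq : 0 < q) (hyq : 2 * q * y ≤ 1) (p : ℤ) :
    y ≤ |y - p / q| := by
  rcases le_or_gt p 0 with hp | hp
  · have : (p : ℝ) / q ≤ 0 := div_nonpos_of_nonpos_of_nonneg (by exact_mod_cast hp) hq.le
    exact le_abs.mpr (Or.inl (by linarith))
  · have hp1 : (1 : ℝ) ≤ p := by exact_mod_cast hp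
    have : 2 * y ≤ p / q := by rw [le_div_iff₀ hq]; linarith
    exact le_abs.mpr (Or.inr (by linarith))

lemma exists_le_and_le_succ {α : Type*} [LinearOrder α] (N : ℕ → α) {x : α} (h0 : N 0 ≤ x) :
    ∀ n, x ≤ N (n + 1) → ∃ i ≤ n, N i ≤ x ∧ x ≤ N (i + 1)
  | 0, h => ⟨0, le_rfl, h0, h⟩
  | n + 1, h => by
    rcases le_or_gt x (N (n + 1)) with h' | h'
    · obtain ⟨i, hi, hx⟩ := exists_le_and_le_succ N h0 n h'
      exact ⟨i, by omega, hx⟩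
    · exact ⟨n + 1, le_rfl, h'.le, h⟩

lemma farFromRationals_ladder {d Q : ℕ} (hd : 1 ≤ d) {N r : ℕ → ℝ} (hN : ∀ i, 0 < N i)
    (hN0 : N 0 ≤ 1) (hNd : (Q : ℝ) ≤ N d)
    (hr : ∀ i < d, ∀ q : ℕ, N i ≤ q → r q ≤ 1 / (2 * N (i + 1))) :
    FarFromRationals (fun i : Fin d => 1 / (2 * N ((i : ℕ) + 1))) Q r := by
  refine FarFromRationals.of_exists_coord fun q hq hqQ => ?_
  have hq : (1 : ℝ) ≤ q := by exact_mod_cast hq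
  have hqN : (q : ℝ) ≤ N (d - 1 + 1) := by
    rw [Nat.sub_add_cancel hd]; exact (Nat.cast_le.mpr hqQ).trans hNd
  obtain ⟨i, hi, hNi, hqNi⟩ := exists_le_and_le_succ N (hN0.trans hq) (d - 1) hqN
  refine ⟨⟨i, by omega⟩, fun p => (hr i (by omega) q hNi).trans
    (le_abs_sub_int_div (by positivity) ?_ p)⟩
  have := hN (i + 1)
  rw [← mul_div_assoc, mul_one, div_le_one (by positivity)]
  linarith

lemma eventually_exists_farFromRationals_of_nonpos {d : ℕ} (hd : 1 ≤ d) {a A κ : ℝ}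
    (hκ : 0 ≤ κ) (ha : a ≤ 0) (hA : 1 - a < A) :
    ∀ᶠ Q : ℕ in atTop, ∃ x : Fin d → ℝ,
      FarFromRationals x Q fun q => κ * (q : ℝ) ^ (-a) * (Q : ℝ) ^ (-A) := by
  filter_upwards [eventually_ge_atTop 1, ((tendsto_rpow_atTop (by linarith : 0 < a + A - 1)).comp
    tendsto_natCast_atTop_atTop).eventually_ge_atTop (2 * κ)] with Q hQ hQκ
  have hQ0 : (0 : ℝ) < Q := by exact_mod_cast hQ
  refine ⟨fun _ => 1 / (2 * Q),
    FarFromRationals.of_exists_coord fun q hq hqQ => ⟨⟨0, hd⟩, fun p => ?_⟩⟩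
  have hq0 : (0 : ℝ) < q := by exact_mod_cast hq
  have hqQ : (q : ℝ) ≤ Q := by exact_mod_cast hqQ
  refine le_trans ?_ (le_abs_sub_int_div hq0 ?_ p)
  · rw [le_div_iff₀ (by positivity)]
    calc κ * (q : ℝ) ^ (-a) * (Q : ℝ) ^ (-A) * (2 * Q)
        ≤ κ * (Q : ℝ) ^ (-a) * (Q : ℝ) ^ (-A) * (2 * Q) := by
          gcongr; linarith
      _ = 2 * κ / (Q : ℝ) ^ (a + A - 1) := by
          rw [div_eq_mul_inv, ← Real.rpow_neg hQ0.le, show -(a + A - 1) = -a + -A + 1 by ring,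
            Real.rpow_add hQ0, Real.rpow_add hQ0, Real.rpow_one]
          ring
      _ ≤ 1 := div_le_one_of_le₀ hQκ (by positivity)
  · rw [← mul_div_assoc, mul_one, div_le_one (by positivity)]
    linarith

lemma eventually_exists_farFromRationals_of_pos {d : ℕ} (hd : 1 ≤ d) {a A κ : ℝ}
    (hκ : 0 < κ) (ha : 0 < a) (hA : (∑ i ∈ range d, a ^ i)⁻¹ < A) :
    ∀ᶠ Q : ℕ in atTop, ∃ x : Fin d → ℝ,
      FarFromRationals x Q fun q => κ * (q : ℝ) ^ (-a) * (Q : ℝ) ^ (-A) := by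
  set σ := ∑ i ∈ range d, a ^ i
  have hσ : 0 < σ := sum_pos (fun i _ => pow_pos ha i) (nonempty_range_iff.mpr (by omega))
  have hAσ : 0 < A * σ - 1 := by linarith [(inv_lt_iff_one_lt_mul₀ hσ).mp hA]
  filter_upwards [eventually_ge_atTop 1, ((tendsto_rpow_atTop hAσ).comp
    tendsto_natCast_atTop_atTop).eventually_ge_atTop ((2 * κ) ^ σ)] with Q hQ hQκ
  have hQ0 : (0 : ℝ) < Q := by exact_mod_cast hQ
  set B := (Q : ℝ) ^ A / (2 * κ)
  have hB : 0 < B := by positivity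
  set N : ℕ → ℝ := fun i => B ^ ∑ j ∈ range i, a ^ j
  have hN : ∀ i, 0 < N i := fun i => by positivity
  have hN_succ : ∀ i, N (i + 1) = B * N i ^ a := fun i => by
    simp only [N, geom_sum_succ]
    rw [Real.rpow_add hB, Real.rpow_one, ← Real.rpow_mul hB.le, mul_comm a, mul_comm]
  refine ⟨_, farFromRationals_ladder hd hN (by simp [N]) ?_ fun i _ q hq => ?_⟩
  · change (Q : ℝ) ≤ B ^ σ
    rw [Real.div_rpow (by positivity) (by positivity), ← Real.rpow_mul hQ0.le,
      le_div_iff₀ (by positivity)]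
    calc (Q : ℝ) * (2 * κ) ^ σ ≤ Q * (Q : ℝ) ^ (A * σ - 1) := by gcongr; exact hQκ
      _ = (Q : ℝ) ^ (A * σ) := by
        rw [Real.rpow_sub hQ0, Real.rpow_one]; field_simp
  · calc κ * (q : ℝ) ^ (-a) * (Q : ℝ) ^ (-A) ≤ κ * N i ^ (-a) * (Q : ℝ) ^ (-A) := by
          gcongr κ * ?_ * _
          exact Real.rpow_le_rpow_of_nonpos (hN i) hq (by linarith)
      _ = 1 / (2 * N (i + 1)) := by
          rw [hN_succ, Real.rpow_neg (hN i).le, Real.rpow_neg hQ0.le]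
          simp only [B]
          field_simp

lemma one_le_abs_sub_int_div {x : ℝ} (hx : x ∈ Set.Icc 0 1) {q : ℕ} (hq : 1 ≤ q) {p : ℤ}
    (hp : p ∉ Icc (-(q : ℤ)) (2 * q)) : 1 ≤ |x - p / q| := by
  have hq' : (0 : ℝ) < q := by exact_mod_cast hq
  rw [mem_Icc, not_and_or, not_le, not_le] at hp
  rcases hp with hp | hp
  · have : (p : ℝ) / q < -1 := by
      rw [div_lt_iff₀ hq']; exact_mod_cast (by linarith : p < -1 * (q : ℤ))
    exact le_abs.mpr (Or.inl (by linarith [hx.1]))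
  · have : (2 : ℝ) < p / q := by
      rw [lt_div_iff₀ hq']; exact_mod_cast hp
    exact le_abs.mpr (Or.inr (by linarith [hx.2]))

lemma volume_iUnion_ball_rationals_le {d q : ℕ} (hq : 1 ≤ q) {r : ℝ} (hr : 0 ≤ r) :
    volume (⋃ p ∈ Fintype.piFinset fun _ : Fin d => Icc (-(q : ℤ)) (2 * q),
      Metric.ball (fun i => (p i : ℝ) / q) r) ≤ ENNReal.ofReal ((8 * q * r) ^ d) := by
  have hball : ∀ c : Fin d → ℝ, volume (Metric.ball c r) ≤ ENNReal.ofReal ((2 * r) ^ d) := by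
    intro c
    rcases hr.eq_or_lt with rfl | hr
    · simp
    · simp [Real.volume_pi_ball c hr]
  have hcard : #(Fintype.piFinset fun _ : Fin d => Icc (-(q : ℤ)) (2 * q)) = (3 * q + 1) ^ d := by
    simp only [Fintype.card_piFinset, Int.card_Icc, prod_const, card_univ, Fintype.card_fin]
    congr 1
    omega
  calc _ ≤ _ := measure_biUnion_finset_le _ _
    _ ≤ _ := sum_le_card_nsmul _ _ _ fun p _ => hball _
    _ = ENNReal.ofReal ((3 * q + 1 : ℕ) ^ d * (2 * r) ^ d) := by
      rw [hcard, ← ENNReal.ofReal_nsmul, nsmul_eq_mul]; push_cast; ring_nf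
    _ ≤ ENNReal.ofReal ((8 * q * r) ^ d) := by
      gcongr
      rw [← mul_pow]
      refine pow_le_pow_left₀ (by positivity) ?_ d
      have : (1 : ℝ) ≤ q := by exact_mod_cast hq
      push_cast
      nlinarith

lemma exists_farFromRationals_of_sum_lt_one {d Q : ℕ} {r : ℕ → ℝ} (hr0 : ∀ q, 0 ≤ r q)
    (hr1 : ∀ q, 1 ≤ q → r q ≤ 1) (hsum : ∑ q ∈ Icc 1 Q, (8 * q * r q) ^ d < 1) :
    ∃ x : Fin d → ℝ, FarFromRationals x Q r := by
  -- As `r q ≤ 1`, only the `p / q` with `p ∈ [-q, 2q]^d` come within `r q` of the unit cube.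
  set bad := ⋃ q ∈ Icc 1 Q, ⋃ p ∈ Fintype.piFinset fun _ : Fin d => Icc (-(q : ℤ)) (2 * q),
    Metric.ball (fun i => (p i : ℝ) / q) (r q)
  have hbad : volume bad < 1 := calc
    volume bad ≤ ∑ q ∈ Icc 1 Q, ENNReal.ofReal ((8 * q * r q) ^ d) :=
      (measure_biUnion_finset_le _ _).trans <| sum_le_sum fun q hq =>
        volume_iUnion_ball_rationals_le (mem_Icc.mp hq).1 (hr0 q)
    _ = ENNReal.ofReal (∑ q ∈ Icc 1 Q, (8 * q * r q) ^ d) :=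
      (ENNReal.ofReal_sum_of_nonneg fun q _ => by have := hr0 q; positivity).symm
    _ < 1 := ENNReal.ofReal_lt_one.mpr hsum
  obtain ⟨x, hx, hxbad⟩ : ∃ x ∈ Set.Icc (0 : Fin d → ℝ) 1, x ∉ bad := by
    by_contra! h
    have := measure_mono (μ := volume) h
    simp only [Real.volume_Icc_pi, Pi.one_apply, Pi.zero_apply, sub_zero, ENNReal.ofReal_one,
      prod_const_one] at this
    exact this.not_gt hbad
  refine ⟨x, fun q hq hqQ p => ?_⟩
  by_cases hp : p ∈ Fintype.piFinset fun _ : Fin d => Icc (-(q : ℤ)) (2 * q)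
  · have : x ∉ Metric.ball (fun i => (p i : ℝ) / q) (r q) := fun h =>
      hxbad (Set.mem_biUnion (mem_Icc.mpr ⟨hq, hqQ⟩) (Set.mem_biUnion hp h))
    simpa [dist_eq_norm] using this
  · obtain ⟨i, hi⟩ : ∃ i, p i ∉ Icc (-(q : ℤ)) (2 * q) := by
      simpa [Fintype.mem_piFinset] using hp
    exact (hr1 q hq).trans <| (one_le_abs_sub_int_div ⟨hx.1 i, hx.2 i⟩ hq hi).trans
      (norm_le_pi_norm (x - fun i => (p i : ℝ) / q) i)

lemma sum_Icc_rpow_neg_le (s : ℝ) {ε : ℝ} (hε : 0 < ε) (Q : ℕ) :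
    ∑ q ∈ Icc 1 Q, (q : ℝ) ^ (-s) ≤
      (∑' n : ℕ, (n : ℝ) ^ (-(1 + ε))) * (Q : ℝ) ^ (max (1 - s) 0 + ε) := by
  have hterm : ∀ q ∈ Icc 1 Q,
      (q : ℝ) ^ (-s) ≤ (q : ℝ) ^ (-(1 + ε)) * (Q : ℝ) ^ (max (1 - s) 0 + ε) := by
    intro q hq
    obtain ⟨hq, hqQ⟩ := mem_Icc.mp hq
    have hq : (1 : ℝ) ≤ q := by exact_mod_cast hq
    have hqQ : (q : ℝ) ≤ Q := by exact_mod_cast hqQ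
    calc (q : ℝ) ^ (-s) = (q : ℝ) ^ (-(1 + ε)) * (q : ℝ) ^ (1 - s + ε) := by
          rw [← Real.rpow_add (by linarith)]; ring_nf
      _ ≤ (q : ℝ) ^ (-(1 + ε)) * (Q : ℝ) ^ (max (1 - s) 0 + ε) := by
          gcongr
          calc (q : ℝ) ^ (1 - s + ε) ≤ (q : ℝ) ^ (max (1 - s) 0 + ε) :=
                Real.rpow_le_rpow_of_exponent_le hq (by gcongr; exact le_max_left _ _)
            _ ≤ (Q : ℝ) ^ (max (1 - s) 0 + ε) := by gcongr
  calc _ ≤ _ := sum_le_sum hterm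
    _ = (∑ q ∈ Icc 1 Q, (q : ℝ) ^ (-(1 + ε))) * (Q : ℝ) ^ (max (1 - s) 0 + ε) := (sum_mul ..).symm
    _ ≤ _ := by
      gcongr
      exact (Real.summable_nat_rpow.mpr (by linarith)).sum_le_tsum _ fun n _ => by positivity

lemma eventually_exists_farFromRationals_of_one_lt {d : ℕ} (hd : 1 ≤ d) {a A κ : ℝ}
    (hκ : 0 ≤ κ) (ha : 1 < a) (hA0 : 0 < A) (hA : 1 + 1 / d - a < A) :
    ∀ᶠ Q : ℕ in atTop, ∃ x : Fin d → ℝ,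
      FarFromRationals x Q fun q => κ * (q : ℝ) ^ (-a) * (Q : ℝ) ^ (-A) := by
  have hd0 : (0 : ℝ) < d := by exact_mod_cast hd
  set s := (a - 1) * d
  set m := max (1 - s) 0
  have hm : m < A * d := by
    refine max_lt ?_ (by positivity)
    have := mul_lt_mul_of_pos_right hA hd0
    rw [sub_mul, add_mul, one_div_mul_cancel hd0.ne'] at this
    linarith
  set ε := (A * d - m) / 2
  have hε : 0 < ε := by simp only [ε]; linarith
  set Z := ∑' n : ℕ, (n : ℝ) ^ (-(1 + ε))
  have hsmall : Tendsto (fun Q : ℕ => (8 * κ) ^ d * Z * (Q : ℝ) ^ (-ε)) atTop (nhds 0) := by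
    simpa using ((tendsto_rpow_neg_atTop hε).comp tendsto_natCast_atTop_atTop).const_mul
      ((8 * κ) ^ d * Z)
  filter_upwards [eventually_ge_atTop 1, hsmall.eventually (gt_mem_nhds one_pos),
    ((tendsto_rpow_atTop hA0).comp tendsto_natCast_atTop_atTop).eventually_ge_atTop κ]
    with Q hQ hQsmall hQκ
  have hQ0 : (0 : ℝ) < Q := by exact_mod_cast hQ
  refine exists_farFromRationals_of_sum_lt_one (fun q => by positivity) (fun q hq => ?_)
    (lt_of_le_of_lt ?_ hQsmall)
  · have hq : (1 : ℝ) ≤ q := by exact_mod_cast hq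
    calc κ * (q : ℝ) ^ (-a) * (Q : ℝ) ^ (-A) ≤ κ * 1 * (Q : ℝ) ^ (-A) := by
          gcongr; exact Real.rpow_le_one_of_one_le_of_nonpos hq (by linarith)
      _ = κ / (Q : ℝ) ^ A := by rw [Real.rpow_neg hQ0.le]; ring
      _ ≤ 1 := div_le_one_of_le₀ hQκ (by positivity)
  · have hterm : ∀ q ∈ Icc 1 Q, (8 * q * (κ * (q : ℝ) ^ (-a) * (Q : ℝ) ^ (-A))) ^ d
        = (8 * κ) ^ d * (Q : ℝ) ^ (-(A * d)) * (q : ℝ) ^ (-s) := by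
      intro q hq
      have hq0 : (0 : ℝ) < q := by exact_mod_cast (mem_Icc.mp hq).1
      rw [show -(A * d) = -A * d by ring, show -s = (1 + -a) * d by ring,
        Real.rpow_mul_natCast hQ0.le, Real.rpow_mul_natCast hq0.le, Real.rpow_add hq0,
        Real.rpow_one]
      ring
    calc ∑ q ∈ Icc 1 Q, (8 * q * (κ * (q : ℝ) ^ (-a) * (Q : ℝ) ^ (-A))) ^ d
        = (8 * κ) ^ d * (Q : ℝ) ^ (-(A * d)) * ∑ q ∈ Icc 1 Q, (q : ℝ) ^ (-s) := by
          rw [sum_congr rfl hterm, mul_sum]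
      _ ≤ (8 * κ) ^ d * (Q : ℝ) ^ (-(A * d)) * (Z * (Q : ℝ) ^ (m + ε)) := by
          gcongr; exact sum_Icc_rpow_neg_le s hε Q
      _ = (8 * κ) ^ d * Z * (Q : ℝ) ^ (-ε) := by
          rw [show -ε = -(A * d) + (m + ε) by simp only [ε]; ring, Real.rpow_add hQ0 (-(A * d))]
          ring

/-- If `A > f_d(a)`, then `ℝ^d` is not uniformly `κΨ_{a,A}`-approximable for any `κ > 0`. -/
theorem not_unif_approx_of_gt_fd (d : ℕ) (hd : 1 ≤ d) (a A : ℝ) (hA : fd d a < A)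
    (κ : ℝ) (hκ : 0 < κ) (Q₀ : ℕ) :
    ∃ x : Fin d → ℝ, ∃ Q : ℕ, Q₀ ≤ Q ∧
      ∀ q : ℕ, 1 ≤ q → q ≤ Q → ∀ p : Fin d → ℤ,
        κ * (q : ℝ) ^ (-a) * (Q : ℝ) ^ (-A) ≤ ‖x - fun i => (p i : ℝ) / q‖ := by
  suffices ∀ᶠ Q : ℕ in atTop, ∃ x : Fin d → ℝ,
      FarFromRationals x Q fun q => κ * (q : ℝ) ^ (-a) * (Q : ℝ) ^ (-A) by
    obtain ⟨Q, hQ₀, x, hx⟩ := ((eventually_ge_atTop Q₀).and this).exists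
    exact ⟨x, Q, hQ₀, hx⟩
  rcases le_or_gt a 0 with ha | ha
  · rw [fd_of_nonpos ha] at hA
    exact eventually_exists_farFromRationals_of_nonpos hd hκ.le ha hA
  rcases le_or_gt a 1 with ha1 | ha1
  · rw [fd_of_pos_of_le_one ha ha1] at hA
    exact eventually_exists_farFromRationals_of_pos hd hκ ha hA
  · rw [fd_of_one_lt ha1, max_lt_iff] at hA
    exact eventually_exists_farFromRationals_of_one_lt hd hκ.le ha1 hA.2 hA.1
end

section
/- Fix d ∈ ℕ (d ≥ 1), a ∈ [0,1], and let A = (∑_{i=0}^{d−1} a^i)^{−1}. Then there exists a constant ε > 0 such that for every sufficiently large integer Q there exists a point x ∈ ℝ^d with the following property: for all q ∈ ℕ with 1 ≤ q ≤ Q and all p ∈ ℤ^d, ‖x − p/q‖_∞ ≥ ε q^{−a} Q^{−A}. In particular, ℝ^d is not uniformly εΨ_{a,A}-approximable. -/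
/-!
Put `s j = ∑_{i<j} a^i` and `T j = Q^(A s j)`, so that `T 0 = 1`, `T d = Q` and
`T (j+1) = Q^A (T j)^a`. The point has coordinates `x_k = 1 / (2 T (k+1))`. A denominator
`q ≤ Q` lies in some window `T k ≤ q ≤ T (k+1)`; there `x_k ≤ 1/(2q)`, so `x_k` is at distance
at least `x_k` from every fraction `p/q`, and `x_k ≥ ½ Q^(-A) (T k)^(-a) ≥ ½ Q^(-A) q^(-a)`.
-/

open Real Finset

lemma le_abs_sub_intCast_div {c q : ℝ} (hq : 0 < q) (hcq : 2 * c * q ≤ 1)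
    (p : ℤ) : c ≤ |c - p / q| := by
  rcases le_or_gt p 0 with hp | hp
  · have : (p : ℝ) / q ≤ 0 := div_nonpos_of_nonpos_of_nonneg (by exact_mod_cast hp) hq.le
    exact (le_sub_self_iff c |>.mpr this).trans (le_abs_self _)
  · have hp : (1 : ℝ) ≤ p := by exact_mod_cast hp
    have : 2 * c ≤ p / q := by
      rw [le_div_iff₀ hq]
      linarith
    rw [abs_sub_comm]
    exact (by linarith : c ≤ p / q - c).trans (le_abs_self _)

-- Take the largest `k < d` with `t k ≤ y`; no monotonicity of `t` is needed.
lemma exists_lt_le_le_succ {α : Type*} [LinearOrder α] (t : ℕ → α) {y : α} :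
    ∀ {d : ℕ}, 1 ≤ d → t 0 ≤ y → y ≤ t d → ∃ k < d, t k ≤ y ∧ y ≤ t (k + 1)
  | 0, hd, _, _ => absurd hd (by norm_num)
  | d + 1, _, h0, hd => by
    by_cases hy : t d ≤ y
    · exact ⟨d, d.lt_succ_self, hy, hd⟩
    · rcases Nat.eq_zero_or_pos d with rfl | hd_pos
      · exact absurd h0 hy
      · obtain ⟨k, hk, hkt⟩ := exists_lt_le_le_succ t hd_pos h0 (not_le.mp hy).le
        exact ⟨k, hk.trans d.lt_succ_self, hkt⟩

theorem le_norm_sub_intCast_div_of_le_mul_rpow {d : ℕ} (hd : 1 ≤ d) {a B : ℝ} (ha : 0 ≤ a)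
    {T : ℕ → ℝ} (hT_pos : ∀ j, 0 < T j) (hT_succ : ∀ j, T (j + 1) ≤ B * T j ^ a)
    {q : ℕ} (hT₀ : T 0 ≤ q) (hT_d : q ≤ T d) (p : Fin d → ℤ) :
    1 / 2 * (q : ℝ) ^ (-a) * B⁻¹ ≤
      ‖(fun k : Fin d => (T (k + 1))⁻¹ / 2) - fun i => (p i : ℝ) / q‖ := by
  obtain ⟨k, hkd, hTk, hTk'⟩ := exists_lt_le_le_succ T hd hT₀ hT_d
  have hq : (0 : ℝ) < q := (hT_pos 0).trans_le hT₀
  have hT_le : T (k + 1) ≤ B * (q : ℝ) ^ a := by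
    have hB : 0 < B :=
      pos_of_mul_pos_left ((hT_pos _).trans_le (hT_succ k)) (rpow_nonneg (hT_pos k).le a)
    exact (hT_succ k).trans (by gcongr; exact (hT_pos k).le)
  have hx : 1 / 2 * (q : ℝ) ^ (-a) * B⁻¹ ≤ (T (k + 1))⁻¹ / 2 := by
    have := inv_anti₀ (hT_pos (k + 1)) hT_le
    rw [mul_inv, ← rpow_neg hq.le] at this
    linarith
  have hdist : (T (k + 1))⁻¹ / 2 ≤ |(T (k + 1))⁻¹ / 2 - p ⟨k, hkd⟩ / q| := by
    have := hT_pos (k + 1)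
    refine le_abs_sub_intCast_div hq ?_ _
    rw [show 2 * ((T (k + 1))⁻¹ / 2) * q = q / T (k + 1) by field_simp]
    exact div_le_one_of_le₀ hTk' this.le
  have hnorm := norm_le_pi_norm
    ((fun k : Fin d => (T (k + 1))⁻¹ / 2) - fun i => (p i : ℝ) / q) ⟨k, hkd⟩
  exact (hx.trans hdist).trans hnorm

noncomputable def rpowGeomSum (Q A a : ℝ) (j : ℕ) : ℝ := Q ^ (A * ∑ i ∈ range j, a ^ i)

section rpowGeomSum

variable {Q : ℝ} (A a : ℝ)

lemma rpowGeomSum_zero : rpowGeomSum Q A a 0 = 1 := by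
  simp [rpowGeomSum]

lemma rpowGeomSum_pos (hQ : 0 < Q) (j : ℕ) : 0 < rpowGeomSum Q A a j :=
  rpow_pos_of_pos hQ _

lemma rpowGeomSum_succ (hQ : 0 < Q) (j : ℕ) :
    rpowGeomSum Q A a (j + 1) = Q ^ A * rpowGeomSum Q A a j ^ a := by
  rw [rpowGeomSum, rpowGeomSum, ← rpow_mul hQ.le, ← rpow_add hQ, geom_sum_succ]
  ring_nf

lemma rpowGeomSum_eq_self {a : ℝ} (ha : 0 ≤ a) {d : ℕ} (hd : 1 ≤ d) :
    rpowGeomSum Q (∑ i ∈ range d, a ^ i)⁻¹ a d = Q := by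
  have : 0 < ∑ i ∈ range d, a ^ i :=
    sum_pos' (fun i _ => pow_nonneg ha i) ⟨0, mem_range.mpr hd, by simp⟩
  rw [rpowGeomSum, inv_mul_cancel₀ this.ne', rpow_one]

end rpowGeomSum

theorem exists_eps_critical_general (d : ℕ) (hd : 1 ≤ d) (a : ℝ) (ha₀ : 0 ≤ a)
    (A : ℝ) (hA : A = (∑ i ∈ Finset.range d, a ^ i)⁻¹) :
    ∃ ε > 0, ∃ Q₀ : ℕ, ∀ Q : ℕ, Q₀ ≤ Q →
      ∃ x : Fin d → ℝ, ∀ q : ℕ, 1 ≤ q → q ≤ Q → ∀ p : Fin d → ℤ,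
        ε * (q : ℝ) ^ (-a) * (Q : ℝ) ^ (-A) ≤ ‖x - fun i => (p i : ℝ) / q‖ := by
  refine ⟨1 / 2, by norm_num, 1, fun Q hQ => ?_⟩
  have hQ : (0 : ℝ) < Q := by exact_mod_cast hQ
  refine ⟨fun k => (rpowGeomSum Q A a (k + 1))⁻¹ / 2, fun q hq hqQ p => ?_⟩
  have hT₀ : rpowGeomSum Q A a 0 ≤ q := by
    rw [rpowGeomSum_zero]; exact_mod_cast hq
  have hT_d : q ≤ rpowGeomSum Q A a d := by
    rw [hA, rpowGeomSum_eq_self ha₀ hd]; exact_mod_cast hqQ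
  rw [rpow_neg hQ.le]
  exact le_norm_sub_intCast_div_of_le_mul_rpow hd ha₀ (rpowGeomSum_pos A a hQ)
    (fun j => (rpowGeomSum_succ A a hQ j).le) hT₀ hT_d p

/-- The negative half of the critical case `A = (∑_{i<d} a^i)⁻¹` for `a ∈ [0,1]`: there is an
`ε > 0` such that for all sufficiently large `Q` there is a point `x ∈ ℝ^d` admitting no
rational approximation `p/q` with `1 ≤ q ≤ Q` and `‖x − p/q‖_∞ < ε q^(−a) Q^(−A)`.
In particular `ℝ^d` is not uniformly `εΨ_{a,A}`-approximable. -/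
theorem exists_eps_critical (d : ℕ) (hd : 1 ≤ d) (a : ℝ) (ha₀ : 0 ≤ a) (ha₁ : a ≤ 1)
    (A : ℝ) (hA : A = (∑ i ∈ Finset.range d, a ^ i)⁻¹) :
    ∃ ε > 0, ∃ Q₀ : ℕ, ∀ Q : ℕ, Q₀ ≤ Q →
      ∃ x : Fin d → ℝ, ∀ q : ℕ, 1 ≤ q → q ≤ Q → ∀ p : Fin d → ℤ,
        ε * (q : ℝ) ^ (-a) * (Q : ℝ) ^ (-A) ≤ ‖x - fun i => (p i : ℝ) / q‖ :=
  exists_eps_critical_general d hd a ha₀ A hA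
end

section
/- Let X be a complete metric space, 𝒬 ⊆ X a dense subset, and H : 𝒬 → (0,∞) a function. Suppose that for every Q > 0 the set { r ∈ 𝒬 : H(r) ≤ Q } intersects every ball of X in only finitely many points. Fix (a, A) ∈ ℝ² and a subset K ⊆ X with the automorphism property. Suppose that for every κ > 0, K is not uniformly κΨ_{a,A}-approximable, i.e., for every κ > 0 and Q₀ ∈ ℕ there exists x ∈ K and an integer Q ≥ Q₀ such that every r ∈ 𝒬 with H(r) ≤ Q satisfies dist(r,x) ≥ κ H(r)^{−a} Q^{−A}. Then the set { x ∈ X : x is not κΨ_{a,A}-approximable for any κ > 0 } is comeager in X. -/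
/-!
Let `A(κ, Q₀)` be the set of `(κΨ_{a,A}, Q₀)`-approximable points; the set in question is the
complement of the countable union of the `A(n, Q₀)`, so it suffices that each `A(κ, Q₀)` is
nowhere dense. If the interior `B` of its closure were nonempty, an automorphism `Φ` would move
`K` into `B`. Since `K` is not uniformly `κ'Ψ`-approximable for a large `κ'`, some `x ∈ K` is
`κ'`-badly approximable at a level `Q'`, and `Φ` distorts distances, heights and levels only by
bounded factors, so `y = Φ x ∈ B` is `2κ`-badly approximable at a level `Q ≥ Q₀`: every
`r ∈ 𝒬` of height at most `Q` lies at distance `≥ 2κ H(r)^{-a} Q^{-A}` from `y`. As only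
finitely many such `r` lie near `y`, a whole neighbourhood of `y` then misses `A(κ, Q₀)`,
contradicting `y ∈ closure A(κ, Q₀)`.
-/

open Set Metric Filter Topology

lemma rpow_neg_abs_mul_rpow_le_rpow {C u v : ℝ} (hC : 0 < C) (hu : 0 < u) (hv : 0 < v)
    (huv : u ≤ C * v) (hvu : v ≤ C * u) (t : ℝ) :
    C ^ (-|t|) * v ^ t ≤ u ^ t := by
  rcases le_or_gt 0 t with ht | ht
  · rw [abs_of_nonneg ht]
    calc C ^ (-t) * v ^ t = (v / C) ^ t := by
          rw [Real.div_rpow hv.le hC.le, Real.rpow_neg hC.le]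
          ring
      _ ≤ u ^ t := Real.rpow_le_rpow (by positivity) ((div_le_iff₀ hC).2 (by linarith)) ht
  · rw [abs_of_neg ht, neg_neg]
    calc C ^ t * v ^ t = (C * v) ^ t := (Real.mul_rpow hC.le hv.le).symm
      _ ≤ u ^ t := Real.rpow_le_rpow_of_nonpos hu huv ht.le

lemma exists_nat_mul_le_le_two_mul {C : ℝ} (hC : 1 ≤ C) {N Q' : ℕ} (h : C * (N + 1) ≤ Q') :
    ∃ Q : ℕ, N < Q ∧ C * Q ≤ Q' ∧ (Q' : ℝ) ≤ 2 * C * Q := by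
  have hC₀ : 0 < C := by linarith
  refine ⟨⌊(Q' : ℝ) / C⌋₊, ?_, ?_, ?_⟩
  · exact Nat.lt_of_succ_le (Nat.le_floor (by rw [le_div_iff₀ hC₀]; push_cast; linarith))
  · rw [← le_div_iff₀' hC₀]
    exact Nat.floor_le (by positivity)
  · have hlt : (Q' : ℝ) / C < ⌊(Q' : ℝ) / C⌋₊ + 1 := Nat.lt_floor_add_one _
    have hone : (1 : ℝ) ≤ ⌊(Q' : ℝ) / C⌋₊ := by
      have : (1 : ℝ) ≤ (Q' : ℝ) / C := by
        rw [le_div_iff₀ hC₀]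
        nlinarith [(N.cast_nonneg : (0 : ℝ) ≤ N)]
      exact_mod_cast Nat.le_floor (by exact_mod_cast this)
    rw [div_lt_iff₀ hC₀] at hlt
    nlinarith

lemma notMem_closure_biUnion_ball {X : Type*} [MetricSpace X] {S : Set X} {T : X → ℝ} {y : X}
    (hT : ∀ r ∈ S, 0 < T r) (hfin : {r ∈ S | dist r y ≤ 1}.Finite)
    (hsep : ∀ r ∈ S, 2 * T r ≤ dist r y) :
    y ∉ closure (⋃ r ∈ S, ball r (T r)) := by
  rw [mem_closure_iff_frequently, not_frequently]
  -- Far centres are handled by `dist w y < 1/2`, the finitely many near ones by continuity.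
  have hnear : ∀ᶠ w in 𝓝 y, ∀ r ∈ {r ∈ S | dist r y ≤ 1}, T r < dist r w := by
    refine (hfin.eventually_all).2 fun r hr => ?_
    have hTr := hT r hr.1
    have hlt : T r < dist r y := by linarith [hsep r hr.1]
    exact (continuous_const.dist continuous_id).continuousAt.eventually (eventually_gt_nhds hlt)
  have hclose : ∀ᶠ w in 𝓝 y, dist w y < 1 / 2 :=
    eventually_nhds_iff.2 ⟨_, one_half_pos, fun _ => id⟩
  filter_upwards [hnear, hclose] with w hwnear hwy hw
  obtain ⟨r, hr, hwr⟩ := mem_iUnion₂.1 hw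
  rw [mem_ball'] at hwr
  by_cases hry : dist r y ≤ 1
  · exact (hwnear r ⟨hr, hry⟩).not_ge hwr.le
  · have := dist_triangle r w y
    linarith [hsep r hr]

section Approximation

variable {X : Type*} [MetricSpace X] (𝒬 : Set X) (H : X → ℝ) (a A : ℝ)

def HasAutomorphismProperty (K : Set X) : Prop :=
  ∀ B : Set X, IsOpen B → B.Nonempty →
    ∃ Φ : X → X, Function.Bijective Φ ∧
      (∃ L : ℝ, 0 < L ∧ ∀ y z : X, L⁻¹ * dist y z ≤ dist (Φ y) (Φ z) ∧
        dist (Φ y) (Φ z) ≤ L * dist y z) ∧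
      Φ '' 𝒬 = 𝒬 ∧
      (∃ C : ℝ, 0 < C ∧ ∀ r ∈ 𝒬, C⁻¹ * H r ≤ H (Φ r) ∧ H (Φ r) ≤ C * H r) ∧
      Φ '' K ⊆ B

/-- The set of `(κΨ_{a,A}, Q₀)`-approximable points. -/
def psiApproxSet (κ : ℝ) (Q₀ : ℕ) : Set X :=
  {x | ∀ Q : ℕ, Q₀ ≤ Q → ∃ r ∈ 𝒬, H r ≤ Q ∧ dist r x < κ * H r ^ (-a) * (Q : ℝ) ^ (-A)}

/-- `x` witnesses, at the level `Q`, the failure of `κΨ_{a,A}`-approximability. -/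
def IsPsiBadAt (κ : ℝ) (Q : ℕ) (x : X) : Prop :=
  ∀ r ∈ 𝒬, H r ≤ Q → κ * H r ^ (-a) * (Q : ℝ) ^ (-A) ≤ dist r x

variable {𝒬 H a A}

lemma psiApproxSet_mono (hHpos : ∀ r ∈ 𝒬, 0 < H r) {κ κ' : ℝ} (hκ : κ ≤ κ') (Q₀ : ℕ) :
    psiApproxSet 𝒬 H a A κ Q₀ ⊆ psiApproxSet 𝒬 H a A κ' Q₀ := by
  intro x hx Q hQ
  obtain ⟨r, hr, hrQ, hrx⟩ := hx Q hQ
  refine ⟨r, hr, hrQ, hrx.trans_le ?_⟩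
  have := hHpos r hr
  gcongr

lemma psiApproxSet_subset_biUnion_ball {κ : ℝ} {Q₀ Q : ℕ} (hQ : Q₀ ≤ Q) :
    psiApproxSet 𝒬 H a A κ Q₀ ⊆
      ⋃ r ∈ {r ∈ 𝒬 | H r ≤ Q}, ball r (κ * H r ^ (-a) * (Q : ℝ) ^ (-A)) := by
  intro x hx
  obtain ⟨r, hr, hrQ, hrx⟩ := hx Q hQ
  exact mem_biUnion ⟨hr, hrQ⟩ (mem_ball'.2 hrx)

lemma isNowhereDense_psiApproxSet (hHpos : ∀ r ∈ 𝒬, 0 < H r)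
    (hfin : ∀ Q : ℝ, 0 < Q → ∀ (z : X) (ρ : ℝ), {r | r ∈ 𝒬 ∧ H r ≤ Q ∧ dist r z ≤ ρ}.Finite)
    {κ : ℝ} (hκ : 0 < κ) {Q₀ : ℕ}
    (hbad : ∀ U : Set X, IsOpen U → U.Nonempty →
      ∃ y ∈ U, ∃ Q : ℕ, Q₀ ≤ Q ∧ 0 < Q ∧ IsPsiBadAt 𝒬 H a A (2 * κ) Q y) :
    IsNowhereDense (psiApproxSet 𝒬 H a A κ Q₀) := by
  rw [IsNowhereDense, eq_empty_iff_forall_notMem]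
  intro z hz
  obtain ⟨y, hy, Q, hQ₀, hQ, hyQ⟩ := hbad _ isOpen_interior ⟨z, hz⟩
  refine notMem_closure_biUnion_ball (S := {r ∈ 𝒬 | H r ≤ Q}) (y := y)
    (fun r hr => ?_)
    ((hfin Q (by exact_mod_cast hQ) y 1).subset fun _ ⟨⟨h𝒬, hH⟩, hd⟩ => ⟨h𝒬, hH, hd⟩)
    (fun r hr => ?_)
    (closure_mono (psiApproxSet_subset_biUnion_ball hQ₀) (interior_subset hy))
  · have := hHpos r hr.1
    positivity
  · linarith [hyQ r hr.1 hr.2]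

lemma IsPsiBadAt.image {Φ : X → X} (hΦ𝒬 : 𝒬 ⊆ Φ '' 𝒬) {L : ℝ} (hL : 0 < L)
    (hLip : ∀ y z : X, L⁻¹ * dist y z ≤ dist (Φ y) (Φ z)) {C : ℝ} (hC : 1 ≤ C)
    (hHΦ : ∀ r ∈ 𝒬, C⁻¹ * H r ≤ H (Φ r) ∧ H (Φ r) ≤ C * H r)
    (hHpos : ∀ r ∈ 𝒬, 0 < H r) {κ : ℝ} (hκ : 0 ≤ κ) {x : X} {Q Q' : ℕ} (hQ : 0 < Q)
    (hCQ : C * Q ≤ Q') (hQ' : (Q' : ℝ) ≤ 2 * C * Q)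
    (hx : IsPsiBadAt 𝒬 H a A (L * C ^ |a| * (2 * C) ^ |A| * κ) Q' x) :
    IsPsiBadAt 𝒬 H a A κ Q (Φ x) := by
  intro r hr hrQ
  obtain ⟨s, hs, rfl⟩ := hΦ𝒬 hr
  have hC₀ : 0 < C := by linarith
  have hQpos : (0 : ℝ) < Q := by exact_mod_cast hQ
  have hs₀ := hHpos s hs
  have hr₀ := hHpos _ hr
  have hHs : H s ≤ C * H (Φ s) := (inv_mul_le_iff₀ hC₀).1 (hHΦ s hs).1
  have hHeight : C ^ (-|a|) * H (Φ s) ^ (-a) ≤ H s ^ (-a) := by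
    simpa using rpow_neg_abs_mul_rpow_le_rpow hC₀ hs₀ hr₀ hHs (hHΦ s hs).2 (-a)
  have hLevel : (2 * C) ^ (-|A|) * (Q : ℝ) ^ (-A) ≤ (Q' : ℝ) ^ (-A) := by
    simpa using rpow_neg_abs_mul_rpow_le_rpow (by linarith) (hQpos.trans_le (by nlinarith))
      hQpos hQ' (by nlinarith) (-A)
  have hsx := hx s hs (by nlinarith)
  calc κ * H (Φ s) ^ (-a) * (Q : ℝ) ^ (-A)
      = L⁻¹ * (L * C ^ |a| * (2 * C) ^ |A| * κ) * (C ^ (-|a|) * H (Φ s) ^ (-a))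
          * ((2 * C) ^ (-|A|) * (Q : ℝ) ^ (-A)) := by
        rw [Real.rpow_neg hC₀.le, Real.rpow_neg (by positivity : (0 : ℝ) ≤ 2 * C)]
        field_simp
    _ ≤ L⁻¹ * (L * C ^ |a| * (2 * C) ^ |A| * κ) * H s ^ (-a) * (Q' : ℝ) ^ (-A) := by
        gcongr
    _ = L⁻¹ * (L * C ^ |a| * (2 * C) ^ |A| * κ * H s ^ (-a) * (Q' : ℝ) ^ (-A)) := by ring
    _ ≤ L⁻¹ * dist s x := by gcongr
    _ ≤ dist (Φ s) (Φ x) := hLip s x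

lemma HasAutomorphismProperty.exists_isPsiBadAt {K : Set X}
    (hauto : HasAutomorphismProperty 𝒬 H K) (hHpos : ∀ r ∈ 𝒬, 0 < H r)
    (hK : ∀ κ > (0 : ℝ), ∀ Q₀ : ℕ, ∃ x ∈ K, ∃ Q : ℕ, Q₀ ≤ Q ∧ IsPsiBadAt 𝒬 H a A κ Q x)
    {κ : ℝ} (hκ : 0 < κ) (Q₀ : ℕ) {U : Set X} (hU : IsOpen U) (hne : U.Nonempty) :
    ∃ y ∈ U, ∃ Q : ℕ, Q₀ ≤ Q ∧ 0 < Q ∧ IsPsiBadAt 𝒬 H a A κ Q y := by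
  obtain ⟨Φ, -, ⟨L, hL, hLip⟩, hΦ𝒬, ⟨C₀, hC₀, hHΦ⟩, hKU⟩ := hauto U hU hne
  set C := max C₀ 1
  have hHΦ' : ∀ r ∈ 𝒬, C⁻¹ * H r ≤ H (Φ r) ∧ H (Φ r) ≤ C * H r := fun r hr =>
    ⟨(mul_le_mul_of_nonneg_right (inv_anti₀ hC₀ (le_max_left _ _)) (hHpos r hr).le).trans
      (hHΦ r hr).1,
    (hHΦ r hr).2.trans (mul_le_mul_of_nonneg_right (le_max_left _ _) (hHpos r hr).le)⟩
  have hC : 1 ≤ C := le_max_right _ _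
  obtain ⟨x, hxK, Q', hQ', hx⟩ :=
    hK (L * C ^ |a| * (2 * C) ^ |A| * κ) (by positivity) ⌈C * (Q₀ + 1)⌉₊
  obtain ⟨Q, hQ₀Q, hCQ, hQ'Q⟩ := exists_nat_mul_le_le_two_mul hC (Nat.ceil_le.1 hQ')
  exact ⟨Φ x, hKU (mem_image_of_mem Φ hxK), Q, hQ₀Q.le, Nat.zero_lt_of_lt hQ₀Q,
    hx.image hΦ𝒬.symm.subset hL (fun y z => (hLip y z).1) hC hHΦ' hHpos hκ.le
      (Nat.zero_lt_of_lt hQ₀Q) hCQ hQ'Q⟩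

end Approximation

theorem comeager_not_approx_general_general {X : Type*} [MetricSpace X]
    (𝒬 : Set X) (H : X → ℝ) (hHpos : ∀ r ∈ 𝒬, 0 < H r)
    (hfin : ∀ Q : ℝ, 0 < Q → ∀ (z : X) (ρ : ℝ),
      {r | r ∈ 𝒬 ∧ H r ≤ Q ∧ dist r z ≤ ρ}.Finite)
    (a A : ℝ) (K : Set X)
    (hauto : ∀ B : Set X, IsOpen B → B.Nonempty →
      ∃ Φ : X → X, Function.Bijective Φ ∧
        (∃ L : ℝ, 0 < L ∧ ∀ y z : X, L⁻¹ * dist y z ≤ dist (Φ y) (Φ z) ∧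
          dist (Φ y) (Φ z) ≤ L * dist y z) ∧
        Φ '' 𝒬 = 𝒬 ∧
        (∃ C : ℝ, 0 < C ∧ ∀ r ∈ 𝒬, C⁻¹ * H r ≤ H (Φ r) ∧ H (Φ r) ≤ C * H r) ∧
        Φ '' K ⊆ B)
    (hK : ∀ κ > (0 : ℝ), ∀ Q₀ : ℕ, ∃ x ∈ K, ∃ Q : ℕ, Q₀ ≤ Q ∧
      ∀ r ∈ 𝒬, H r ≤ Q → κ * (H r) ^ (-a) * (Q : ℝ) ^ (-A) ≤ dist r x) :
    {x : X | ¬ ∃ κ > (0 : ℝ), ∃ Q₀ : ℕ, ∀ Q : ℕ, Q₀ ≤ Q →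
      ∃ r ∈ 𝒬, H r ≤ Q ∧ dist r x < κ * (H r) ^ (-a) * (Q : ℝ) ^ (-A)} ∈ residual X := by
  have hnowhere (n Q₀ : ℕ) : IsNowhereDense (psiApproxSet 𝒬 H a A (n + 1) Q₀) :=
    isNowhereDense_psiApproxSet hHpos hfin (by positivity) fun _ hU hne =>
      HasAutomorphismProperty.exists_isPsiBadAt hauto hHpos hK (by positivity) Q₀ hU hne
  have happrox : {x | ∃ κ > (0 : ℝ), ∃ Q₀ : ℕ, x ∈ psiApproxSet 𝒬 H a A κ Q₀} ⊆
      ⋃ (n : ℕ) (Q₀ : ℕ), psiApproxSet 𝒬 H a A (n + 1) Q₀ := by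
    rintro x ⟨κ, -, Q₀, hx⟩
    exact mem_iUnion₂.2 ⟨⌈κ⌉₊, Q₀,
      psiApproxSet_mono hHpos (by linarith [Nat.le_ceil κ]) Q₀ hx⟩
  have hmeagre : IsMeagre {x | ∃ κ > (0 : ℝ), ∃ Q₀ : ℕ, x ∈ psiApproxSet 𝒬 H a A κ Q₀} :=
    (isMeagre_iUnion fun n => isMeagre_iUnion fun Q₀ => (hnowhere n Q₀).isMeagre).mono happrox
  rwa [IsMeagre, compl_ofPred] at hmeagre

/-- **General comeagerness of non-approximable points.** Let `X` be a complete metric space,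
`𝒬 ⊆ X` dense, and `H : X → ℝ` positive on `𝒬` (a Diophantine space), such that for every
`Q > 0` the set `{r ∈ 𝒬 : H r ≤ Q}` meets every ball in finitely many points. Suppose
`K ⊆ X` has the automorphism property (every nonempty open `B` contains the image of `K`
under some bi-Lipschitz bijection preserving `𝒬` and distorting `H` boundedly), and that
`K` is not uniformly `κΨ_{a,A}`-approximable for any `κ > 0`. Then the set of points of `X`
which are not `κΨ_{a,A}`-approximable for any `κ > 0` is comeager. -/
theorem comeager_not_approx_general {X : Type*} [MetricSpace X] [CompleteSpace X]
    (𝒬 : Set X) (hdense : Dense 𝒬) (H : X → ℝ) (hHpos : ∀ r ∈ 𝒬, 0 < H r)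
    (hfin : ∀ Q : ℝ, 0 < Q → ∀ (z : X) (ρ : ℝ),
      {r | r ∈ 𝒬 ∧ H r ≤ Q ∧ dist r z ≤ ρ}.Finite)
    (a A : ℝ) (K : Set X)
    (hauto : ∀ B : Set X, IsOpen B → B.Nonempty →
      ∃ Φ : X → X, Function.Bijective Φ ∧
        (∃ L : ℝ, 0 < L ∧ ∀ y z : X, L⁻¹ * dist y z ≤ dist (Φ y) (Φ z) ∧
          dist (Φ y) (Φ z) ≤ L * dist y z) ∧
        Φ '' 𝒬 = 𝒬 ∧
        (∃ C : ℝ, 0 < C ∧ ∀ r ∈ 𝒬, C⁻¹ * H r ≤ H (Φ r) ∧ H (Φ r) ≤ C * H r) ∧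
        Φ '' K ⊆ B)
    (hK : ∀ κ > (0 : ℝ), ∀ Q₀ : ℕ, ∃ x ∈ K, ∃ Q : ℕ, Q₀ ≤ Q ∧
      ∀ r ∈ 𝒬, H r ≤ Q → κ * (H r) ^ (-a) * (Q : ℝ) ^ (-A) ≤ dist r x) :
    {x : X | ¬ ∃ κ > (0 : ℝ), ∃ Q₀ : ℕ, ∀ Q : ℕ, Q₀ ≤ Q →
      ∃ r ∈ 𝒬, H r ≤ Q ∧ dist r x < κ * (H r) ^ (-a) * (Q : ℝ) ^ (-A)} ∈ residual X :=
  comeager_not_approx_general_general 𝒬 H hHpos hfin a A K hauto hK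
end

section
/- Fix (a, A) ∈ ℝ² with a < 1 < min(A, A + a) and A + a < 2 (equivalently, c = (A − |a|)/(min(A, A + a) − 1) > 2). Then the set { x ∈ ℝ : x is not κΨ_{a,A}-approximable for any κ > 0 } has Lebesgue measure zero. -/
/-- `x ∈ ℝ` is `κΨ_{a,A}`-approximable: for some `Q₀` and every integer `Q ≥ Q₀` there are
`1 ≤ q ≤ Q` and `p ∈ ℤ` with `|x − p/q| < κ q^(−a) Q^(−A)`. -/
def PsiApprox (κ a A : ℝ) (x : ℝ) : Prop :=
  ∃ Q₀ : ℕ, ∀ Q : ℕ, Q₀ ≤ Q →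
    ∃ q : ℕ, 1 ≤ q ∧ q ≤ Q ∧ ∃ p : ℤ,
      |x - (p : ℝ) / q| < κ * (q : ℝ) ^ (-a) * (Q : ℝ) ^ (-A)


/-!
Put `s = 1 + (1 - a) / (A - 1)`, so that `s > 2` exactly when `A + a < 2`. Since `∑ q · q^(-s)`
converges, Borel–Cantelli shows that almost every `x` satisfies `|x - p/q| < q^(-s)` for only
finitely many `q`; for irrational such `x` this upgrades to `|x - p/q| ≥ c q^(-s)` for all `q`.
Feeding this lower bound into Dirichlet's theorem, whose approximant `p/q` with `q ≤ Q` satisfies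
`|x - p/q| < 1/(qQ)`, forces `q^(s-1) > cQ`, and since `(s - 1)(A - 1) = 1 - a` this turns
`1/(qQ)` into `c^(1-A) q^(-a) Q^(-A)`. Rational `x` are trivially approximable.
-/

open MeasureTheory Filter Set Topology
open scoped ENNReal

section Khintchine

variable {ψ : ℕ → ℝ} {x : ℝ} {q : ℕ}

def approxSet (ψ : ℕ → ℝ) (q : ℕ) : Set ℝ :=
  ⋃ p : ℤ, Metric.ball ((p : ℝ) / q) (ψ q)

lemma mem_approxSet : x ∈ approxSet ψ q ↔ ∃ p : ℤ, |x - p / q| < ψ q := by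
  simp [approxSet, Real.dist_eq]

lemma notMem_limsup_approxSet :
    x ∉ limsup (approxSet ψ) atTop ↔ ∀ᶠ q in atTop, ∀ p : ℤ, ψ q ≤ |x - p / q| := by
  simp [mem_limsup_iff_frequently_mem, mem_approxSet]

lemma approxSet_inter_Icc_subset (hψ : ψ q ≤ 1) (N : ℕ) :
    approxSet ψ q ∩ Icc (-N : ℝ) N ⊆
      ⋃ p ∈ Finset.Icc (-((N + 1) * q : ℕ) : ℤ) ((N + 1) * q : ℕ),
        Metric.ball ((p : ℝ) / q) (ψ q) := by
  rintro x ⟨hx, hxN⟩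
  obtain ⟨p, hp⟩ := mem_approxSet.1 hx
  rcases q.eq_zero_or_pos with rfl | hq
  · -- `p / 0 = 0`, so every ball is centred at `0`
    exact mem_biUnion (x := 0) (by simp) (by simpa [Real.dist_eq] using hp)
  have hq' : (0 : ℝ) < q := by exact_mod_cast hq
  have hpq : |(p : ℝ) / q| ≤ N + 1 := by
    have := abs_sub_abs_le_abs_sub ((p : ℝ) / q) x
    linarith [abs_le.2 hxN, abs_sub_comm x ((p : ℝ) / q)]
  rw [abs_div, Nat.abs_cast, div_le_iff₀ hq'] at hpq
  have hp_le : |p| ≤ ((N + 1) * q : ℕ) := by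
    have : ((|p| : ℤ) : ℝ) ≤ ((((N + 1) * q : ℕ) : ℤ) : ℝ) := by push_cast; exact hpq
    exact_mod_cast this
  exact mem_biUnion (Finset.mem_Icc.2 (abs_le.1 hp_le)) (by rwa [Metric.mem_ball, Real.dist_eq])

lemma volume_approxSet_inter_Icc_le (hψ : ψ q ≤ 1) (N : ℕ) :
    volume (approxSet ψ q ∩ Icc (-N : ℝ) N) ≤
      ENNReal.ofReal (4 * (N + 1) * (q * ψ q) + 2 * ψ q) := by
  set k := (N + 1) * q
  calc volume (approxSet ψ q ∩ Icc (-N : ℝ) N)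
      ≤ ∑ p ∈ Finset.Icc (-k : ℤ) k, volume (Metric.ball ((p : ℝ) / q) (ψ q)) :=
        (measure_mono (approxSet_inter_Icc_subset hψ N)).trans (measure_biUnion_finset_le _ _)
    _ = ((2 * k + 1 : ℕ) : ℝ≥0∞) * ENNReal.ofReal (2 * ψ q) := by
        simp only [Real.volume_ball, Finset.sum_const, Int.card_Icc, nsmul_eq_mul]
        congr 2
        omega
    _ = ENNReal.ofReal (4 * (N + 1) * (q * ψ q) + 2 * ψ q) := by
        rw [← ENNReal.ofReal_natCast, ← ENNReal.ofReal_mul (by positivity)]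
        congr 1
        push_cast [k]
        ring

theorem volume_limsup_approxSet_eq_zero (hψ0 : ∀ q, 0 ≤ ψ q) (hψ1 : ∀ q, ψ q ≤ 1)
    (hψ : Summable fun q : ℕ => q * ψ q) : volume (limsup (approxSet ψ) atTop) = 0 := by
  have hψ_summable : Summable ψ := by
    refine (summable_nat_add_iff 1).1 (((summable_nat_add_iff 1).2 hψ).of_nonneg_of_le
      (fun q => hψ0 _) fun q => ?_)
    exact le_mul_of_one_le_left (hψ0 _) (by simp)
  have hIcc (N : ℕ) : volume (limsup (approxSet ψ) atTop ∩ Icc (-N : ℝ) N) = 0 := by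
    rw [← Measure.restrict_apply' measurableSet_Icc]
    refine measure_limsup_atTop_eq_zero (ne_top_of_le_ne_top (ENNReal.ofReal_ne_top
      (r := ∑' q : ℕ, (4 * (N + 1) * (q * ψ q) + 2 * ψ q))) ?_)
    calc ∑' q, volume.restrict (Icc (-N : ℝ) N) (approxSet ψ q)
        = ∑' q, volume (approxSet ψ q ∩ Icc (-N : ℝ) N) := by
          simp only [Measure.restrict_apply' measurableSet_Icc]
      _ ≤ ∑' q, ENNReal.ofReal (4 * (N + 1) * (q * ψ q) + 2 * ψ q) :=
          ENNReal.tsum_le_tsum fun q => volume_approxSet_inter_Icc_le (hψ1 q) N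
      _ = ENNReal.ofReal (∑' q : ℕ, (4 * (N + 1) * (q * ψ q) + 2 * ψ q)) :=
          (ENNReal.ofReal_tsum_of_nonneg (fun q => by have := hψ0 q; positivity)
            ((hψ.mul_left _).add (hψ_summable.mul_left _))).symm
  refine measure_mono_null (fun x hx => ?_) (measure_iUnion_null hIcc)
  exact mem_iUnion.2 ⟨⌈|x|⌉₊, hx, abs_le.1 (Nat.le_ceil _)⟩

end Khintchine

lemma volume_limsup_approxSet_rpow_eq_zero {s : ℝ} (hs : 2 < s) :
    volume (limsup (approxSet fun q : ℕ => (q : ℝ) ^ (-s)) atTop) = 0 := by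
  refine volume_limsup_approxSet_eq_zero (fun q => by positivity) (fun q => ?_) ?_
  · rcases q.eq_zero_or_pos with rfl | hq
    · simp [Real.zero_rpow (by linarith : -s ≠ 0)]
    · exact Real.rpow_le_one_of_one_le_of_nonpos (by exact_mod_cast hq) (by linarith)
  · refine (Real.summable_nat_rpow.2 (by linarith : 1 + -s < -1)).congr fun q => ?_
    rw [Real.rpow_add' q.cast_nonneg (by linarith), Real.rpow_one]

lemma Irrational.exists_pos_le_abs_sub_div {x : ℝ} (hx : Irrational x) (q : ℕ) :
    ∃ δ > 0, ∀ p : ℤ, δ ≤ |x - p / q| := by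
  rcases q.eq_zero_or_pos with rfl | hq
  · exact ⟨|x|, abs_pos.2 hx.ne_zero, fun p => by simp⟩
  have hq' : (0 : ℝ) < q := by exact_mod_cast hq
  have habs (p : ℤ) : |x - p / q| = |q * x - p| / q := by
    rw [← abs_of_pos hq', ← abs_div, abs_of_pos hq']
    congr 1
    field_simp
  refine ⟨|q * x - round (q * x)| / q, ?_, fun p => ?_⟩
  · exact div_pos (abs_pos.2 (sub_ne_zero.2 ((hx.natCast_mul hq.ne').ne_int _))) hq'
  · rw [habs]
    exact div_le_div_of_nonneg_right (round_le _ p) hq'.le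

lemma Irrational.exists_pos_mul_le_abs_sub_div {x : ℝ} (hx : Irrational x) {ψ : ℕ → ℝ}
    (h : ∀ᶠ q in atTop, ∀ p : ℤ, ψ q ≤ |x - p / q|) :
    ∃ c > 0, ∀ q : ℕ, ∀ p : ℤ, c * ψ q ≤ |x - p / q| := by
  obtain ⟨m, hm⟩ := eventually_atTop.1 h
  have hsmall (q : ℕ) : ∀ᶠ c in 𝓝[>] (0 : ℝ), ∀ p : ℤ, c * ψ q ≤ |x - p / q| := by
    obtain ⟨δ, hδ, hδx⟩ := hx.exists_pos_le_abs_sub_div q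
    have hlim : Tendsto (fun c : ℝ => c * ψ q) (𝓝[>] 0) (𝓝 0) :=
      ((continuous_mul_const (ψ q)).tendsto' 0 0 (zero_mul _)).mono_left nhdsWithin_le_nhds
    filter_upwards [hlim.eventually (ge_mem_nhds hδ)] with c hc p using hc.trans (hδx p)
  have hinit := (eventually_all_finset (Finset.range m)).2 fun q _ => hsmall q
  have hle_one : ∀ᶠ c in 𝓝[>] (0 : ℝ), c ≤ 1 := nhdsWithin_le_nhds (eventually_le_nhds one_pos)
  obtain ⟨c, hc_init, hc1, hc0⟩ :=
    (hinit.and (hle_one.and self_mem_nhdsWithin)).exists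
  refine ⟨c, hc0, fun q p => ?_⟩
  rcases lt_or_ge q m with hqm | hqm
  · exact hc_init q (Finset.mem_range.2 hqm) p
  · calc c * ψ q ≤ c * |x - p / q| := mul_le_mul_of_nonneg_left (hm q hqm p) hc0.le
      _ ≤ |x - p / q| := mul_le_of_le_one_left (abs_nonneg _) hc1

lemma one_div_mul_lt_of_mul_lt_rpow {a A s c k Q : ℝ} (hA : 1 < A)
    (hs : (s - 1) * (A - 1) = 1 - a) (hc : 0 < c) (hk : 0 < k) (hQ : 0 < Q)
    (h : c * Q < k ^ (s - 1)) :
    1 / (k * Q) < c ^ (-(A - 1)) * k ^ (-a) * Q ^ (-A) := by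
  have hpow : c ^ (A - 1) * Q ^ (A - 1) < k ^ (1 - a) := by
    rw [← Real.mul_rpow hc.le hQ.le, ← hs, Real.rpow_mul hk.le]
    exact Real.rpow_lt_rpow (by positivity) h (by linarith)
  have hka : k ^ (-a) = k ^ (1 - a) / k := by
    rw [sub_eq_add_neg, Real.rpow_add hk, Real.rpow_one, mul_div_cancel_left₀ _ hk.ne']
  have hQA : Q ^ (-A) = 1 / (Q ^ (A - 1) * Q) := by
    rw [← Real.rpow_add_one hQ.ne', sub_add_cancel, Real.rpow_neg hQ.le, one_div]
  rw [Real.rpow_neg hc.le, hka, hQA]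
  have hcA := Real.rpow_pos_of_pos hc (A - 1)
  have hQA' := Real.rpow_pos_of_pos hQ (A - 1)
  rw [div_lt_iff₀ (by positivity)]
  field_simp
  nlinarith

lemma psiApprox_of_forall_mul_rpow_le {a A s c x : ℝ} (hA : 1 < A)
    (hs : (s - 1) * (A - 1) = 1 - a) (hc : 0 < c)
    (h : ∀ q : ℕ, ∀ p : ℤ, c * (q : ℝ) ^ (-s) ≤ |x - p / q|) :
    PsiApprox (c ^ (-(A - 1))) a A x := by
  refine ⟨1, fun Q hQ => ?_⟩
  obtain ⟨r, hr, hden⟩ := Real.exists_rat_abs_sub_le_and_den_le x hQ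
  refine ⟨r.den, r.pos, hden, r.num, ?_⟩
  have hk : (0 : ℝ) < r.den := by exact_mod_cast r.pos
  have hQ' : (0 : ℝ) < Q := by exact_mod_cast hQ
  have hdir : |x - r.num / r.den| < 1 / (r.den * Q) := by
    rw [← Rat.cast_def]
    refine hr.trans_lt (one_div_lt_one_div_of_lt (by positivity) ?_)
    nlinarith
  refine hdir.trans (one_div_mul_lt_of_mul_lt_rpow hA hs hc hk hQ' ?_)
  have hlow := (h r.den r.num).trans_lt hdir
  rw [Real.rpow_neg hk.le, ← div_eq_mul_inv, div_lt_div_iff₀ (by positivity) (by positivity)] at hlow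
  rw [Real.rpow_sub_one hk.ne', lt_div_iff₀ hk]
  nlinarith

lemma psiApprox_ratCast (a A : ℝ) (r : ℚ) : PsiApprox 1 a A r := by
  refine ⟨r.den, fun Q hQ => ⟨r.den, r.pos, hQ, r.num, ?_⟩⟩
  have hQ : (0 : ℝ) < Q := by exact_mod_cast r.pos.trans_le hQ
  rw [← Rat.cast_def, sub_self, abs_zero]
  positivity

theorem measure_zero_not_approx_general (a A : ℝ)
    (hA : 1 < min A (A + a)) (hAa : A + a < 2) :
    MeasureTheory.volume {x : ℝ | ¬ ∃ κ > 0, PsiApprox κ a A x} = 0 := by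
  have hA1 : 1 < A := (lt_min_iff.1 hA).1
  set s := 1 + (1 - a) / (A - 1) with hs_def
  have hs : (s - 1) * (A - 1) = 1 - a := by
    rw [hs_def, add_sub_cancel_left, div_mul_cancel₀ _ (by linarith)]
  have hs2 : 2 < s := by
    have : 1 < (1 - a) / (A - 1) := (one_lt_div (by linarith)).2 (by linarith)
    linarith
  refine measure_mono_null (fun x hx => ?_) (volume_limsup_approxSet_rpow_eq_zero hs2)
  by_contra hlim
  refine hx ?_
  by_cases hirr : Irrational x
  · obtain ⟨c, hc, hbound⟩ := hirr.exists_pos_mul_le_abs_sub_div (notMem_limsup_approxSet.1 hlim)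
    exact ⟨_, Real.rpow_pos_of_pos hc _, psiApprox_of_forall_mul_rpow_le hA1 hs hc hbound⟩
  · obtain ⟨r, rfl⟩ := not_not.1 hirr
    exact ⟨1, one_pos, psiApprox_ratCast a A r⟩

/-- If `a < 1 < min(A, A+a)` and `A + a < 2`, then the set of `x ∈ ℝ` which are not
`κΨ_{a,A}`-approximable for any `κ > 0` is a Lebesgue nullset. -/
theorem measure_zero_not_approx (a A : ℝ)
    (ha : a < 1) (hA : 1 < min A (A + a)) (hAa : A + a < 2) :
    MeasureTheory.volume {x : ℝ | ¬ ∃ κ > 0, PsiApprox κ a A x} = 0 :=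
  measure_zero_not_approx_general a A hA hAa
end

section
/- Fix (a, A) ∈ ℝ² with a < 1 < min(A, A + a), and set b = min(A, A + a) − 1 and c = (A − |a|)/b. Then there exists a constant C'' > 0 (depending only on a and A) with the following property: if x ∈ ℝ is irrational with continued fraction denominators (q_n), D > 0, and q_{n+1} ≤ D q_n^{c−1} for all sufficiently large n, then x is (C'' D^b)Ψ_{a,A}-approximable, i.e., there exists Q₀ ∈ ℕ such that for every integer Q ≥ Q₀ there exist 1 ≤ q ≤ Q and p ∈ ℤ with |x − p/q| < C'' D^b q^{−a} Q^{−A}. -/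
/-! Given `Q ≥ q_N`, choose `n ≥ N` with `q_n ≤ Q < q_{n+1}`; the convergent `p_n / q_n` satisfies
`|x - p_n / q_n| ≤ 1 / (q_n q_{n+1})`. From `Q < q_{n+1} ≤ D q_n^(c-1)` we get
`(Q / D)^b < q_n^((c-1) b) = q_n^(1 - max a 0)`, and since `Q^(b+1) = Q^(min A (A+a))` this gives
`1 / (q_n q_{n+1}) < D^b q_n^(-max a 0) Q^(-min A (A+a))`. For `a ≥ 0` this is the claim with
`q = q_n`. For `a < 0` the same rational is written with the multiple `q = ⌊Q / q_n⌋ q_n ∈ (Q/2, Q]`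
of `q_n`, which costs the factor `2^|a|`. -/

open Filter GenContFract
open GenContFract (of)

namespace GenContFract

theorem exists_int_eq_contsAux {K : Type*} [DivisionRing K] {g : GenContFract K}
    (hh : ∃ z : ℤ, g.h = z)
    (hs : ∀ n gp, g.s.get? n = some gp → (∃ z : ℤ, gp.a = z) ∧ ∃ z : ℤ, gp.b = z) (n : ℕ) :
    (∃ z : ℤ, (g.contsAux n).a = z) ∧ ∃ z : ℤ, (g.contsAux n).b = z := by
  induction n using Nat.twoStepInduction with
  | zero => exact ⟨⟨1, by simp [contsAux]⟩, ⟨0, by simp [contsAux]⟩⟩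
  | one =>
    obtain ⟨z, hz⟩ := hh
    exact ⟨⟨z, by simp [contsAux, hz]⟩, ⟨1, by simp [contsAux]⟩⟩
  | more n ih₀ ih₁ =>
    rcases hgp : g.s.get? n with _ | gp
    · rwa [contsAux_stable_step_of_terminated hgp]
    obtain ⟨⟨a, ha⟩, b, hb⟩ := hs n gp hgp
    obtain ⟨⟨p₀, hp₀⟩, q₀, hq₀⟩ := ih₀
    obtain ⟨⟨p₁, hp₁⟩, q₁, hq₁⟩ := ih₁
    rw [contsAux_recurrence hgp rfl rfl]
    exact ⟨⟨b * p₁ + a * p₀, by simp [*]⟩, ⟨b * q₁ + a * q₀, by simp [*]⟩⟩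

variable {K : Type*} [Field K] [LinearOrder K] [FloorRing K]

theorem of_exists_int_eq_contsAux (v : K) (n : ℕ) :
    (∃ z : ℤ, ((of v).contsAux n).a = z) ∧ ∃ z : ℤ, ((of v).contsAux n).b = z :=
  exists_int_eq_contsAux ⟨⌊v⌋, of_h_eq_floor⟩
    (fun _ _ h => (of_partNum_eq_one_and_exists_int_partDen_eq h).imp
      (fun h => ⟨1, by simp [h]⟩) id) n

theorem exists_int_eq_of_num (v : K) (n : ℕ) : ∃ p : ℤ, (of v).nums n = p :=
  (of_exists_int_eq_contsAux v (n + 1)).1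

theorem exists_nat_eq_of_den [IsStrictOrderedRing K] (v : K) (n : ℕ) :
    ∃ q : ℕ, (of v).dens n = q := by
  obtain ⟨z, hz⟩ := (of_exists_int_eq_contsAux v (n + 1)).2
  have hz' : (of v).dens n = z := hz
  lift z to ℕ using by exact_mod_cast hz' ▸ zero_le_of_den
  exact ⟨z, mod_cast hz'⟩

theorem one_le_of_den [IsStrictOrderedRing K] (v : K) (n : ℕ) : 1 ≤ (of v).dens n :=
  zeroth_den_eq_one.symm.le.trans
    (monotone_nat_of_le_succ (f := (of v).dens) (fun _ => of_den_mono) n.zero_le)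

end GenContFract

theorem Irrational.not_terminatedAt_of {x : ℝ} (hx : Irrational x) (n : ℕ) :
    ¬(of x).TerminatedAt n := fun h =>
  let ⟨q, hq⟩ := (terminates_iff_rat x).1 ⟨n, h⟩
  hx ⟨q, hq.symm⟩

theorem Irrational.tendsto_of_dens_atTop {x : ℝ} (hx : Irrational x) :
    Tendsto (of x).dens atTop atTop := by
  refine (tendsto_add_atTop_iff_nat 1).1 (tendsto_atTop_mono (fun n => ?_)
    (tendsto_natCast_atTop_atTop.comp Nat.fib_add_two_strictMono.tendsto_atTop))
  exact succ_nth_fib_le_of_nth_den (Or.inr (hx.not_terminatedAt_of n))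

theorem exists_le_lt_succ_of_eventually_lt {α : Type*} [LinearOrder α] {u : ℕ → α} {y : α}
    {N : ℕ} (hN : u N ≤ y) (h : ∀ᶠ m in atTop, y < u m) :
    ∃ n ≥ N, u n ≤ y ∧ y < u (n + 1) := by
  by_contra! H
  have hle : ∀ n ≥ N, u n ≤ y := fun n hn => Nat.le_induction hN H n hn
  obtain ⟨n, hlt, hn⟩ := (h.and (eventually_ge_atTop N)).exists
  exact (hlt.trans_le (hle n hn)).false

theorem Nat.exists_mul_le_lt_two_mul {u Q : ℕ} (hu : 0 < u) (huQ : u ≤ Q) :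
    ∃ m, u * m ≤ Q ∧ Q < 2 * (u * m) := by
  refine ⟨Q / u, Nat.mul_div_le Q u, ?_⟩
  have h1 : u ≤ u * (Q / u) := Nat.le_mul_of_pos_right u ((Nat.one_le_div_iff hu).2 huQ)
  have := Nat.div_add_mod Q u
  have := Nat.mod_lt Q hu
  omega

section DenominatorGrowth

variable {a A b c : ℝ}

theorem sub_one_mul_eq_one_sub_max (hb : b = min A (A + a) - 1) (hbpos : 0 < b)
    (hc : c = (A - |a|) / b) : (c - 1) * b = 1 - max a 0 := by
  rw [sub_mul, hc, div_mul_cancel₀ _ hbpos.ne', one_mul, hb]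
  rcases le_total 0 a with h | h
  · rw [abs_of_nonneg h, min_eq_left (by linarith), max_eq_left h]; ring
  · rw [abs_of_nonpos h, min_eq_right (by linarith), max_eq_right h]; ring

theorem one_div_mul_lt_of_lt_of_le_mul_rpow (hb : b = min A (A + a) - 1) (hbpos : 0 < b)
    (hc : c = (A - |a|) / b) {D Q u v : ℝ} (hD : 0 < D) (hQ : 0 < Q) (hu : 0 < u)
    (hQv : Q < v) (hv : v ≤ D * u ^ (c - 1)) :
    1 / (u * v) < D ^ b * u ^ (-max a 0) * Q ^ (-min A (A + a)) := by
  have hQD : Q / D < u ^ (c - 1) := by rw [div_lt_iff₀' hD]; exact hQv.trans_le hv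
  have hpow : (Q / D) ^ b < u ^ (1 - max a 0) := by
    rw [← sub_one_mul_eq_one_sub_max hb hbpos hc, Real.rpow_mul hu.le]
    exact Real.rpow_lt_rpow (by positivity) hQD hbpos
  have hQpow : Q ^ min A (A + a) < D ^ b * u ^ (1 - max a 0) * v :=
    calc Q ^ min A (A + a) = D ^ b * (Q / D) ^ b * Q := by
          rw [← Real.mul_rpow hD.le (by positivity), mul_div_cancel₀ _ hD.ne',
            ← Real.rpow_add_one hQ.ne', hb, sub_add_cancel]
      _ < D ^ b * u ^ (1 - max a 0) * v := mul_lt_mul'' (by gcongr) hQv (by positivity) hQ.le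
  rw [div_lt_iff₀ (mul_pos hu (hQ.trans hQv))]
  calc 1 = Q ^ min A (A + a) * Q ^ (-min A (A + a)) := by rw [← Real.rpow_add hQ]; simp
    _ < D ^ b * u ^ (1 - max a 0) * v * Q ^ (-min A (A + a)) := by gcongr
    _ = _ := by rw [sub_eq_neg_add, Real.rpow_add hu, Real.rpow_one]; ring

end DenominatorGrowth

theorem exists_abs_sub_div_lt_of_abs_sub_div_lt {x K a A : ℝ} {p : ℤ} {u Q : ℕ} (hK : 0 ≤ K)
    (hu : 0 < u) (huQ : u ≤ Q)
    (h : |x - p / u| < K * (u : ℝ) ^ (-max a 0) * (Q : ℝ) ^ (-min A (A + a))) :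
    ∃ q : ℕ, 1 ≤ q ∧ q ≤ Q ∧ ∃ p' : ℤ,
      |x - p' / q| < 2 ^ |a| * K * (q : ℝ) ^ (-a) * (Q : ℝ) ^ (-A) := by
  rcases le_or_gt 0 a with ha | ha
  · refine ⟨u, hu, huQ, p, h.trans_le ?_⟩
    rw [max_eq_left ha, min_eq_left (by linarith), mul_assoc (2 ^ |a|), mul_assoc (2 ^ |a|)]
    exact le_mul_of_one_le_left (by positivity) (Real.one_le_rpow one_le_two (abs_nonneg a))
  · obtain ⟨m, hmQ, hQm⟩ := Nat.exists_mul_le_lt_two_mul hu huQ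
    have hm : m ≠ 0 := by rintro rfl; simp at hQm
    have hQ : (0 : ℝ) < Q := by exact_mod_cast hu.trans_le huQ
    refine ⟨u * m, Nat.one_le_iff_ne_zero.2 (by positivity), hmQ, m * p, ?_⟩
    have hfrac : ((m * p : ℤ) : ℝ) / ((u * m : ℕ) : ℝ) = p / u := by
      push_cast; field_simp
    have hQq : (Q : ℝ) ^ (-a) ≤ 2 ^ |a| * ((u * m : ℕ) : ℝ) ^ (-a) := by
      rw [abs_of_neg ha, ← Real.mul_rpow (by norm_num) (by positivity)]
      exact Real.rpow_le_rpow hQ.le (by exact_mod_cast hQm.le) (by linarith)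
    rw [hfrac]
    refine h.trans_le ?_
    rw [max_eq_right ha.le, min_eq_right (by linarith), neg_zero, Real.rpow_zero, mul_one,
      neg_add, Real.rpow_add hQ]
    calc K * ((Q : ℝ) ^ (-A) * (Q : ℝ) ^ (-a))
        = K * (Q : ℝ) ^ (-a) * (Q : ℝ) ^ (-A) := by ring
      _ ≤ K * (2 ^ |a| * ((u * m : ℕ) : ℝ) ^ (-a)) * (Q : ℝ) ^ (-A) := by gcongr
      _ = 2 ^ |a| * K * ((u * m : ℕ) : ℝ) ^ (-a) * (Q : ℝ) ^ (-A) := by ring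

theorem den_growth_implies_approx_general (a A b c : ℝ)
    (hA : 1 < min A (A + a))
    (hb : b = min A (A + a) - 1) (hc : c = (A - |a|) / b) :
    ∃ C'' > 0, ∀ x : ℝ, Irrational x → ∀ D > 0,
      (∃ N : ℕ, ∀ n ≥ N,
        (GenContFract.of x).dens (n + 1) ≤ D * ((GenContFract.of x).dens n) ^ (c - 1)) →
      ∃ Q₀ : ℕ, ∀ Q : ℕ, Q₀ ≤ Q →
        ∃ q : ℕ, 1 ≤ q ∧ q ≤ Q ∧ ∃ p : ℤ,
          |x - (p : ℝ) / q| < C'' * D ^ b * (q : ℝ) ^ (-a) * (Q : ℝ) ^ (-A) := by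
  have hbpos : 0 < b := by rw [hb]; linarith
  refine ⟨2 ^ |a|, by positivity, fun x hx D hD ⟨N, hN⟩ =>
    ⟨max 1 ⌈(of x).dens N⌉₊, fun Q hQ => ?_⟩⟩
  have hQ0 : (0 : ℝ) < Q := by exact_mod_cast le_of_max_le_left hQ
  have hNQ : (of x).dens N ≤ Q :=
    (Nat.le_ceil _).trans (by exact_mod_cast le_of_max_le_right hQ)
  obtain ⟨n, hn, hnQ, hQn⟩ := exists_le_lt_succ_of_eventually_lt hNQ
    (hx.tendsto_of_dens_atTop.eventually_gt_atTop _)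
  obtain ⟨p, hp⟩ := exists_int_eq_of_num x n
  obtain ⟨u, hu⟩ := exists_nat_eq_of_den x n
  have hu0 : (0 : ℝ) < u := hu ▸ zero_lt_one.trans_le (one_le_of_den x n)
  refine exists_abs_sub_div_lt_of_abs_sub_div_lt (p := p) (by positivity)
    (by exact_mod_cast hu0) (by exact_mod_cast hu ▸ hnQ) ?_
  calc |x - p / u| ≤ 1 / ((of x).dens n * (of x).dens (n + 1)) := by
        rw [← hp, ← hu, ← conv_eq_num_div_den]
        exact abs_sub_convs_le (hx.not_terminatedAt_of n)
    _ < _ := by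
        rw [hu]
        exact one_div_mul_lt_of_lt_of_le_mul_rpow hb hbpos hc hD hQ0 hu0 hQn (hu ▸ hN n hn)

/-- If `a < 1 < min(A, A+a)`, `b = min(A, A+a) − 1`, `c = (A − |a|)/b`, then there is a
constant `C'' > 0` such that every irrational `x` whose continued fraction denominators
`(q_n)` eventually satisfy `q_{n+1} ≤ D q_n^(c−1)` is `(C'' D^b)Ψ_{a,A}`-approximable. -/
theorem den_growth_implies_approx (a A b c : ℝ)
    (ha : a < 1) (hA : 1 < min A (A + a))
    (hb : b = min A (A + a) - 1) (hc : c = (A - |a|) / b) :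
    ∃ C'' > 0, ∀ x : ℝ, Irrational x → ∀ D > 0,
      (∃ N : ℕ, ∀ n ≥ N,
        (GenContFract.of x).dens (n + 1) ≤ D * ((GenContFract.of x).dens n) ^ (c - 1)) →
      ∃ Q₀ : ℕ, ∀ Q : ℕ, Q₀ ≤ Q →
        ∃ q : ℕ, 1 ≤ q ∧ q ≤ Q ∧ ∃ p : ℤ,
          |x - (p : ℝ) / q| < C'' * D ^ b * (q : ℝ) ^ (-a) * (Q : ℝ) ^ (-A) :=
  den_growth_implies_approx_general a A b c hA hb hc
end

section
/- Fix d ∈ ℕ (d ≥ 1). There exist ε > 0 and x ∈ ℝ^d such that x is not εΨ_{1+1/d, 0}-approximable: for every q ∈ ℕ with q ≥ 1 and every p ∈ ℤ^d, ‖x − p/q‖_∞ ≥ ε q^{−(1+1/d)}. (Such x is a badly approximable vector; consequently, for a = 1 + 1/d and A = 0, ℝ^d is not εΨ_{a,A}-approximable.) -/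
/-!
Take `x = (θ, θ², …, θᵈ)` with `θ = 2 ^ (1 / (d + 1))` and suppose `q ‖x - p / q‖ = E`.
With `a = (q, p₁, …, p_d)`, the integers `P m = 2 ^ (m / (d + 1)) * a (m % (d + 1))` satisfy
`|q θ ^ m - P m| ≤ 2 E` for `m ≤ 2 d`. The Hankel matrix `(P (j + k))_{j, k ≤ d}` is the Gram
matrix, in the basis `1, θ, …, θᵈ` of the field `ℚ(θ)`, of the form `(u, v) ↦ L (u v)` where
`L θⁱ = aᵢ`; since `L ≠ 0` and `ℚ(θ)` is a field this form is nondegenerate, so the determinant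
is a nonzero integer. Subtracting `θʲ` times row `0` from row `j` leaves rows of size `O(E)`,
whence `1 ≤ |det| ≪ q Eᵈ`, i.e. `‖x - p / q‖ ≫ q ^ (-(1 + 1 / d))`.
-/

open Polynomial
open scoped Nat

theorem Polynomial.irreducible_X_pow_sub_two {n : ℕ} (hn : n ≠ 0) :
    Irreducible (X ^ n - C 2 : ℚ[X]) := by
  have hmonic : (X ^ n - C 2 : ℤ[X]).Monic := monic_X_pow_sub_C 2 hn
  have hprime : (Ideal.span {(2 : ℤ)}).IsPrime :=
    (Ideal.span_singleton_prime two_ne_zero).mpr Int.prime_two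
  have heis : (X ^ n - C 2 : ℤ[X]).IsEisensteinAt (Ideal.span {2}) := by
    refine hmonic.isEisensteinAt_of_mem_of_notMem hprime.ne_top (fun hm => ?_) ?_
    · rw [natDegree_X_pow_sub_C] at hm
      rw [coeff_sub, coeff_X_pow, coeff_C, if_neg hm.ne]
      split_ifs <;> simp
    · rw [coeff_sub, coeff_X_pow, coeff_C, if_neg (Ne.symm hn), if_pos rfl,
        Ideal.span_singleton_pow, Ideal.mem_span_singleton]
      decide
  have hirr := heis.irreducible hprime hmonic.isPrimitive
    (by rwa [natDegree_X_pow_sub_C, pos_iff_ne_zero])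
  simpa [map_ofNat C] using
    (IsPrimitive.Int.irreducible_iff_irreducible_map_cast hmonic.isPrimitive).mp hirr

theorem Module.Basis.det_functional_mul_ne_zero {F K ι : Type*} [Field F] [Field K]
    [Algebra F K] [Fintype ι] [DecidableEq ι] (b : Module.Basis ι F K) {L : K →ₗ[F] F}
    (hL : L ≠ 0) :
    (Matrix.of fun i j => L (b i * b j)).det ≠ 0 := by
  obtain ⟨z, hz⟩ : ∃ z, L z ≠ 0 := by simpa [LinearMap.ext_iff] using hL
  have hsep (x : K) (hx : ∀ y, L (x * y) = 0) : x = 0 := by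
    by_contra hx0
    exact hz (by simpa [hx0] using hx (x⁻¹ * z))
  have hB : ((LinearMap.mul F K).compr₂ L).Nondegenerate :=
    ⟨fun x hx => hsep x (by simpa using hx),
      fun y hy => hsep y (by simpa [mul_comm y] using hy)⟩
  convert (LinearMap.BilinForm.nondegenerate_iff_det_ne_zero b).mp hB
  ext i j
  simp [LinearMap.BilinForm.toMatrix_apply]

def Matrix.hankel {R : Type*} (P : ℕ → R) (n : ℕ) : Matrix (Fin n) (Fin n) R :=
  Matrix.of fun j k => P (j + k)

def twoPowExtend {n : ℕ} [NeZero n] (a : Fin n → ℤ) (m : ℕ) : ℤ :=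
  2 ^ (m / n) * a (Fin.ofNat n m)

theorem det_hankel_twoPowExtend_ne_zero {n : ℕ} [NeZero n] {a : Fin n → ℤ} (ha : a ≠ 0) :
    (Matrix.hankel (twoPowExtend a) n).det ≠ 0 := by
  have hf := irreducible_X_pow_sub_two (NeZero.ne n)
  have := Fact.mk hf
  set θ := AdjoinRoot.root (X ^ n - C 2 : ℚ[X])
  let b := (AdjoinRoot.powerBasis hf.ne_zero).basis.reindex (finCongr natDegree_X_pow_sub_C)
  have hb (i : Fin n) : b i = θ ^ (i : ℕ) := by
    rw [Module.Basis.reindex_apply, PowerBasis.basis_eq_pow]; rfl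
  have hθ : θ ^ n = 2 := by simp [θ, root_X_pow_sub_C_pow]
  let L := b.constr ℚ fun i => (a i : ℚ)
  have hLb (i : Fin n) : L (b i) = a i := b.constr_basis ℚ _ i
  have hL (m : ℕ) : L (θ ^ m) = twoPowExtend a m := by
    have : θ ^ m = (2 ^ (m / n) : ℚ) • b (Fin.ofNat n m) := by
      rw [hb, Fin.val_ofNat, Algebra.smul_def]
      conv_lhs => rw [← Nat.div_add_mod m n, pow_add, pow_mul, hθ]
      simp
    simp [this, hLb, twoPowExtend]
  have hL0 : L ≠ 0 := by
    obtain ⟨i, hi⟩ := Function.ne_iff.mp ha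
    exact fun h => hi (by simpa [h] using (hLb i).symm)
  have hmap : (Matrix.hankel (twoPowExtend a) n).map ((↑) : ℤ → ℚ) =
      Matrix.of fun i j => L (b i * b j) := by
    ext i j
    simp [Matrix.hankel, hb, ← pow_add, hL]
  have hdet := b.det_functional_mul_ne_zero hL0
  rw [← hmap, ← Int.cast_det] at hdet
  exact_mod_cast hdet

theorem Matrix.abs_det_le_factorial_mul_prod {R ι : Type*} [CommRing R] [LinearOrder R]
    [IsStrictOrderedRing R] [Fintype ι] [DecidableEq ι] (A : Matrix ι ι R) {r : ι → R}
    (h : ∀ i j, |A i j| ≤ r i) : |A.det| ≤ (Fintype.card ι)! * ∏ i, r i := by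
  rw [Matrix.det_apply]
  calc |∑ σ : Equiv.Perm ι, Equiv.Perm.sign σ • ∏ i, A (σ i) i|
      ≤ ∑ σ : Equiv.Perm ι, |Equiv.Perm.sign σ • ∏ i, A (σ i) i| :=
        Finset.abs_sum_le_sum_abs _ _
    _ = ∑ σ : Equiv.Perm ι, ∏ i, |A (σ i) i| := by
        refine Finset.sum_congr rfl fun σ _ => ?_
        rcases Int.units_eq_one_or (Equiv.Perm.sign σ) with h1 | h1 <;>
          simp [h1, Finset.abs_prod]
    _ ≤ ∑ σ : Equiv.Perm ι, ∏ i, r (σ i) := by gcongr with σ _ i; exact h _ _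
    _ = (Fintype.card ι)! * ∏ i, r i := by
        simp [Equiv.prod_comp, Fintype.card_perm]

theorem abs_mul_pow_sub_twoPowExtend_le {n : ℕ} [NeZero n] {θ q E : ℝ} (hθ : θ ^ n = 2)
    {a : Fin n → ℤ} (happrox : ∀ i : Fin n, |q * θ ^ (i : ℕ) - a i| ≤ E) (m : ℕ) :
    |q * θ ^ m - twoPowExtend a m| ≤ 2 ^ (m / n) * E := by
  have : q * θ ^ m - twoPowExtend a m =
      2 ^ (m / n) * (q * θ ^ (Fin.ofNat n m : ℕ) - a (Fin.ofNat n m)) := by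
    have hpow : θ ^ m = 2 ^ (m / n) * θ ^ (m % n) := by
      rw [← hθ, ← pow_mul, ← pow_add, Nat.div_add_mod]
    rw [Fin.val_ofNat, twoPowExtend, hpow]
    push_cast
    ring
  rw [this, abs_mul, abs_of_pos (by positivity)]
  gcongr
  exact happrox _

theorem Matrix.abs_det_le_of_abs_sub_mul_row_zero_le {𝕜 : Type*} [CommRing 𝕜] [LinearOrder 𝕜]
    [IsStrictOrderedRing 𝕜] {d : ℕ} (H : Matrix (Fin (d + 1)) (Fin (d + 1)) 𝕜)
    (t : Fin (d + 1) → 𝕜) {R ρ : 𝕜} (hrow0 : ∀ k, |H 0 k| ≤ R)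
    (hrow : ∀ j k, j ≠ 0 → |H j k - t j * H 0 k| ≤ ρ) :
    |H.det| ≤ (d + 1)! * (R * ρ ^ d) := by
  let c : Fin (d + 1) → 𝕜 := fun j => if j = 0 then 0 else -t j
  let G : Matrix (Fin (d + 1)) (Fin (d + 1)) 𝕜 := Matrix.of fun j k => H j k + c j * H 0 k
  have hG : G.det = H.det :=
    Matrix.det_eq_of_forall_row_eq_smul_add_const c 0 (by simp [c]) fun _ _ => rfl
  let r : Fin (d + 1) → 𝕜 := fun j => if j = 0 then R else ρ
  have hGr (j k : Fin (d + 1)) : |G j k| ≤ r j := by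
    by_cases hj : j = 0
    · subst hj
      simpa [G, c, r] using hrow0 k
    · simpa [G, c, r, hj, ← sub_eq_add_neg] using hrow j k hj
  have hprod : ∏ j, r j = R * ρ ^ d := by
    simp [r, Fin.prod_univ_succ, Fin.succ_ne_zero]
  simpa [hG, hprod] using G.abs_det_le_factorial_mul_prod hGr

theorem one_le_factorial_mul_of_abs_sub_le {d : ℕ} {θ q E : ℝ} (hθ1 : 1 ≤ θ)
    (hθ : θ ^ (d + 1) = 2) {a : Fin (d + 1) → ℤ} (ha : a ≠ 0)
    (happrox : ∀ i : Fin (d + 1), |q * θ ^ (i : ℕ) - a i| ≤ E) :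
    1 ≤ (d + 1)! * ((2 * |q| + E) * (4 * E) ^ d) := by
  set P := twoPowExtend a
  have hθpow (j : Fin (d + 1)) : θ ^ (j : ℕ) ≤ 2 := hθ ▸ pow_le_pow_right₀ hθ1 j.is_le'
  have herr (m : ℕ) (hm : m < 2 * (d + 1)) : |q * θ ^ m - P m| ≤ 2 * E := by
    refine (abs_mul_pow_sub_twoPowExtend_le hθ happrox m).trans ?_
    have : m / (d + 1) ≤ 1 := Nat.lt_succ_iff.mp ((Nat.div_lt_iff_lt_mul d.succ_pos).mpr hm)
    gcongr
    · exact (abs_nonneg _).trans (happrox 0)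
    · exact (pow_le_pow_right₀ one_le_two this).trans_eq (pow_one 2)
  have herr' (k : Fin (d + 1)) : |q * θ ^ (k : ℕ) - P k| ≤ E := by
    simpa [Nat.div_eq_of_lt k.is_lt] using abs_mul_pow_sub_twoPowExtend_le hθ happrox k
  have hrow0 (k : Fin (d + 1)) : |(P k : ℝ)| ≤ 2 * |q| + E := by
    calc |(P k : ℝ)| = |q * θ ^ (k : ℕ) - (q * θ ^ (k : ℕ) - P k)| := by ring_nf
      _ ≤ |q * θ ^ (k : ℕ)| + |q * θ ^ (k : ℕ) - P k| := abs_sub _ _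
      _ = |q| * θ ^ (k : ℕ) + |q * θ ^ (k : ℕ) - P k| := by
          rw [abs_mul, abs_of_pos (by positivity : 0 < θ ^ (k : ℕ))]
      _ ≤ 2 * |q| + E := by nlinarith [hθpow k, herr' k, abs_nonneg q]
  have hrow (j k : Fin (d + 1)) : |(P (j + k) : ℝ) - θ ^ (j : ℕ) * P k| ≤ 4 * E := by
    calc |(P (j + k) : ℝ) - θ ^ (j : ℕ) * P k|
        = |θ ^ (j : ℕ) * (q * θ ^ (k : ℕ) - P k) - (q * θ ^ (j + k : ℕ) - P (j + k))| := by
          ring_nf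
      _ ≤ |θ ^ (j : ℕ) * (q * θ ^ (k : ℕ) - P k)| + |q * θ ^ (j + k : ℕ) - P (j + k)| :=
          abs_sub _ _
      _ = θ ^ (j : ℕ) * |q * θ ^ (k : ℕ) - P k| + |q * θ ^ (j + k : ℕ) - P (j + k)| := by
          rw [abs_mul, abs_of_pos (by positivity : 0 < θ ^ (j : ℕ))]
      _ ≤ 2 * E + 2 * E := add_le_add
          (mul_le_mul (hθpow j) (herr' k) (abs_nonneg _) zero_le_two) (herr _ (by omega))
      _ = 4 * E := by ring
  have hdet : (Matrix.hankel P (d + 1)).det ≠ 0 := det_hankel_twoPowExtend_ne_zero ha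
  calc (1 : ℝ) ≤ |((Matrix.hankel P (d + 1)).map ((↑) : ℤ → ℝ)).det| := by
        rw [← Int.cast_det, ← Int.cast_abs]
        exact_mod_cast Int.one_le_abs hdet
    _ ≤ _ := Matrix.abs_det_le_of_abs_sub_mul_row_zero_le _ (θ ^ ·.val)
        (by simpa [Matrix.hankel] using hrow0)
        (fun j k _ => by simpa [Matrix.hankel] using hrow j k)

theorem mul_pow_lt_of_lt_mul_rpow {d : ℕ} (hd : d ≠ 0) {q y c : ℝ} (hq : 0 < q) (hy : 0 ≤ y)
    (h : y < c * q ^ (-(1 + 1 / (d : ℝ)))) : (q * y) ^ d < c ^ d / q := by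
  have hlt : q * y < c * q ^ (-(1 / (d : ℝ))) := by
    calc q * y < q * (c * q ^ (-(1 + 1 / (d : ℝ)))) := mul_lt_mul_of_pos_left h hq
      _ = c * q ^ (-(1 / (d : ℝ))) := by
        rw [neg_add, Real.rpow_add hq, Real.rpow_neg_one]
        field_simp
  calc (q * y) ^ d < (c * q ^ (-(1 / (d : ℝ)))) ^ d := by gcongr
    _ = c ^ d / q := by
      rw [mul_pow, ← Real.rpow_mul_natCast hq.le, neg_mul, one_div_mul_cancel (by positivity),
        Real.rpow_neg_one, div_eq_mul_inv]

theorem abs_mul_pow_sub_cons_le {d q : ℕ} (hq : q ≠ 0) (θ : ℝ) (p : Fin d → ℤ)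
    (i : Fin (d + 1)) :
    |q * θ ^ (i : ℕ) - (Fin.cons (q : ℤ) p : Fin (d + 1) → ℤ) i| ≤
      q * ‖(fun i : Fin d => θ ^ ((i : ℕ) + 1)) - fun i => (p i : ℝ) / q‖ := by
  induction i using Fin.cases with
  | zero => simpa using mul_nonneg q.cast_nonneg (norm_nonneg _)
  | succ i =>
    have hq0 : (0 : ℝ) < q := by positivity
    have : |θ ^ ((i : ℕ) + 1) - p i / q| ≤ _ :=
      norm_le_pi_norm ((fun i : Fin d => θ ^ ((i : ℕ) + 1)) - fun i => (p i : ℝ) / q) i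
    calc |q * θ ^ ((i : ℕ) + 1) - p i| = |q * (θ ^ ((i : ℕ) + 1) - p i / q)| := by
          rw [mul_sub, mul_div_cancel₀ _ hq0.ne']
      _ = q * |θ ^ ((i : ℕ) + 1) - p i / q| := by rw [abs_mul, abs_of_pos hq0]
      _ ≤ _ := by gcongr

/-- There exist `ε > 0` and a (badly approximable) point `x ∈ ℝ^d` such that every rational
vector `p/q` satisfies `‖x − p/q‖_∞ ≥ ε q^(−(1+1/d))`; hence `x` is not
`εΨ_{1+1/d,0}`-approximable and `ℝ^d` is not `εΨ_{1+1/d,0}`-approximable. -/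
theorem exists_badly_approximable (d : ℕ) (hd : 1 ≤ d) :
    ∃ ε > 0, ∃ x : Fin d → ℝ, ∀ q : ℕ, 1 ≤ q → ∀ p : Fin d → ℤ,
      ε * (q : ℝ) ^ (-(1 + 1 / (d : ℝ))) ≤ ‖x - fun i => (p i : ℝ) / q‖ := by
  set θ : ℝ := 2 ^ ((d + 1 : ℕ) : ℝ)⁻¹
  have hθ : θ ^ (d + 1) = 2 := Real.rpow_inv_natCast_pow zero_le_two d.succ_ne_zero
  have hθ1 : 1 ≤ θ := Real.one_le_rpow one_le_two (by positivity)
  set ε : ℝ := 1 / (3 * 4 ^ d * (d + 1)!)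
  have hε1 : ε ≤ 1 := div_le_one_of_le₀ (one_le_mul_of_one_le_of_one_le
    (one_le_mul_of_one_le_of_one_le (by norm_num) (one_le_pow₀ (by norm_num)))
    (by exact_mod_cast (d + 1).factorial_pos)) (by positivity)
  refine ⟨ε, by positivity, fun i => θ ^ ((i : ℕ) + 1), fun q hq p => ?_⟩
  by_contra! hlt
  have hq' : q ≠ 0 := by omega
  have hq1 : (1 : ℝ) ≤ q := by exact_mod_cast hq
  set E := q * ‖(fun i : Fin d => θ ^ ((i : ℕ) + 1)) - fun i => (p i : ℝ) / q‖
  have hEd : E ^ d < ε / q :=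
    (mul_pow_lt_of_lt_mul_rpow (by omega) (by positivity) (norm_nonneg _) hlt).trans_le
      (by gcongr; exact pow_le_of_le_one (by positivity) hε1 (by omega))
  have hE1 : E < 1 := (pow_lt_one_iff_of_nonneg (by positivity) (by omega)).mp
    (hEd.trans_le (div_le_one_of_le₀ (hε1.trans hq1) (by positivity)))
  have hlow := one_le_factorial_mul_of_abs_sub_le hθ1 hθ (a := Fin.cons (q : ℤ) p)
    (fun h => hq' (by simpa using congrFun h 0)) (abs_mul_pow_sub_cons_le hq' θ p)
  refine hlow.not_gt ?_
  calc (d + 1)! * ((2 * |(q : ℝ)| + E) * (4 * E) ^ d)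
      ≤ (d + 1)! * (3 * q * (4 ^ d * E ^ d)) := by
        rw [abs_of_nonneg (by positivity), mul_pow]; gcongr; linarith
    _ < (d + 1)! * (3 * q * (4 ^ d * (ε / q))) := by gcongr
    _ = 1 := by simp only [ε]; field_simp
end
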